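/- arXiv:2507.10322 — 5 statements merged into one kernel-verified Lean document; each statement's English description precedes it below -/
import Mathlib

section
/- Let B = k[x_1,...,x_n,T_1,...,T_n] with n ≥ 2, bigraded by deg x_i = (1,0), deg T_i = (0,1). Let f ∈ k[x_1,...,x_n] be a nonzero homogeneous polynomial of degree d ≥ 1, and let f_0 = f, f_1,...,f_d be a downgraded sequence of f: that is, f_i = (T_1 ... T_n)·∂f_{i-1} where ∂f_{i-1} ∈ B^n is any column of bihomogeneous entries of equal bidegree with (x_1 ... x_n)·∂f_{i-1} = f_{i-1}. Then for all 0 ≤ i ≤ d, f_i is nonzero and bihomogeneous of bidegree (d−i, i). -/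
open MvPolynomial

noncomputable section

variable (k : Type*) [Field k] (n : ℕ)

/-- The polynomial ring `B = k[x₁,…,xₙ,T₁,…,Tₙ]`. -/
abbrev B := MvPolynomial (Fin n ⊕ Fin n) k

/-- The variable `xᵢ`. -/
def xv (i : Fin n) : B k n := X (Sum.inl i)

/-- The variable `Tᵢ`. -/
def Tv (i : Fin n) : B k n := X (Sum.inr i)

/-- The ideal `I₂(ψ)` of 2×2 minors of the matrix `ψ` with rows `(x₁,…,xₙ)`, `(T₁,…,Tₙ)`. -/
def I2 : Ideal (B k n) :=
  Ideal.span {p | ∃ i j : Fin n, p = xv k n i * Tv k n j - xv k n j * Tv k n i}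

/-- The bigrading: `deg xᵢ = (1,0)`, `deg Tᵢ = (0,1)`. -/
def w : (Fin n ⊕ Fin n) → ℕ × ℕ := Sum.elim (fun _ => (1, 0)) (fun _ => (0, 1))

/-- `fs` (with witnessing columns `co`) is a downgraded sequence of `F` (with `deg F = d`):
`fs 0 = F(x)`, and for `i < d`, `co i` is a column of bihomogeneous entries of equal bidegree
with `(x₁ … xₙ)·(co i) = fs i` and `fs (i+1) = (T₁ … Tₙ)·(co i)`. -/
def IsDowngradedSeq (d : ℕ) (F : MvPolynomial (Fin n) k) (fs : ℕ → B k n)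
    (co : ℕ → Fin n → B k n) : Prop :=
  fs 0 = rename Sum.inl F ∧
  ∀ i < d, (∃ m : ℕ × ℕ, ∀ j, IsWeightedHomogeneous (w n) (co i j) m) ∧
    (∑ j, xv k n j * co i j) = fs i ∧ fs (i + 1) = ∑ j, Tv k n j * co i j

/-!
Collapsing each `Tᵢ` onto `xᵢ`, i.e. the ring map `B → k[x]`, `xᵢ, Tᵢ ↦ xᵢ`, identifies the two
products `(x₁ … xₙ)·∂fᵢ₋₁` and `(T₁ … Tₙ)·∂fᵢ₋₁`, so it sends every `fᵢ` to `f ≠ 0`. Once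
`fᵢ₋₁ ≠ 0` is known, its bidegree `(d-i+1, i-1)` forces the common bidegree of the entries of
`∂fᵢ₋₁` to be `(d-i, i-1)`, hence `fᵢ` has bidegree `(d-i, i)`.
-/

namespace Finsupp

variable {σ τ M N : Type*} [AddCommMonoid M] [AddCommMonoid N]

theorem weight_mapDomain (w : τ → M) (f : σ → τ) (e : σ →₀ ℕ) :
    weight w (e.mapDomain f) = weight (w ∘ f) e := by
  simp [weight]

theorem weight_comp_addMonoidHom (g : M →+ N) (w : σ → M) (e : σ →₀ ℕ) :
    weight (g ∘ w) e = g (weight w e) := by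
  simp only [weight_apply, map_finsuppSum, map_nsmul, Function.comp_apply]

end Finsupp

namespace MvPolynomial

variable {R σ τ M N : Type*} [CommSemiring R] [AddCommMonoid M] [AddCommMonoid N]

theorem IsWeightedHomogeneous.rename {w : τ → M} {φ : MvPolynomial σ R} {m : M} (f : σ → τ)
    (hφ : IsWeightedHomogeneous (w ∘ f) φ m) : IsWeightedHomogeneous w (rename f φ) m := by
  intro e he
  obtain ⟨u, rfl, hu⟩ := coeff_rename_ne_zero f φ e he
  rw [Finsupp.weight_mapDomain, hφ hu]

theorem IsWeightedHomogeneous.comp_addMonoidHom {w : σ → M} {φ : MvPolynomial σ R} {m : M}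
    (g : M →+ N) (hφ : IsWeightedHomogeneous w φ m) : IsWeightedHomogeneous (g ∘ w) φ (g m) := by
  intro e he
  rw [Finsupp.weight_comp_addMonoidHom, hφ he]

theorem isWeightedHomogeneous_sum_X_mul {ι : Type*} (s : Finset ι) {w : σ → M} {a : ι → σ}
    {c : ι → MvPolynomial σ R} {u m : M} (ha : ∀ j, w (a j) = u)
    (hc : ∀ j, IsWeightedHomogeneous w (c j) m) :
    IsWeightedHomogeneous w (∑ j ∈ s, X (a j) * c j) (u + m) :=
  IsWeightedHomogeneous.sum _ _ _ fun j _ => ha j ▸ (isWeightedHomogeneous_X R w (a j)).mul (hc j)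

end MvPolynomial

section Downgraded

variable {k n}

theorem isWeightedHomogeneous_rename_inl {d : ℕ} {F : MvPolynomial (Fin n) k}
    (hF : F.IsHomogeneous d) : IsWeightedHomogeneous (w n) (rename Sum.inl F) (d, 0) := by
  have hw : AddMonoidHom.inl ℕ ℕ ∘ (1 : Fin n → ℕ) = w n ∘ Sum.inl := funext fun _ => rfl
  exact .rename Sum.inl (hw ▸ hF.comp_addMonoidHom (AddMonoidHom.inl ℕ ℕ))

abbrev collapse : B k n →ₐ[k] MvPolynomial (Fin n) k := rename (Sum.elim id id)

theorem collapse_sum_xv_mul (c : Fin n → B k n) :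
    collapse (∑ j, xv k n j * c j) = collapse (∑ j, Tv k n j * c j) := by
  simp only [map_sum, map_mul, xv, Tv, rename_X, Sum.elim_inl, Sum.elim_inr]

namespace IsDowngradedSeq

variable {d : ℕ} {F : MvPolynomial (Fin n) k} {fs : ℕ → B k n} {co : ℕ → Fin n → B k n}

theorem collapse_eq (h : IsDowngradedSeq k n d F fs co) : ∀ i ≤ d, collapse (fs i) = F
  | 0, _ => by rw [h.1, rename_rename, Sum.elim_comp_inl, rename_id_apply]
  | i + 1, hi => by
    obtain ⟨-, hx, hT⟩ := h.2 i hi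
    rw [hT, ← collapse_sum_xv_mul, hx, collapse_eq h i (Nat.le_of_succ_le hi)]

theorem ne_zero (h : IsDowngradedSeq k n d F fs co) (hF0 : F ≠ 0) {i : ℕ} (hi : i ≤ d) :
    fs i ≠ 0 := fun h0 => hF0 (by rw [← h.collapse_eq i hi, h0, map_zero])

theorem isWeightedHomogeneous_succ (h : IsDowngradedSeq k n d F fs co) {i : ℕ} (hi : i < d)
    (hne : fs i ≠ 0) (hfs : IsWeightedHomogeneous (w n) (fs i) (d - i, i)) :
    IsWeightedHomogeneous (w n) (fs (i + 1)) (d - (i + 1), i + 1) := by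
  obtain ⟨⟨m, hm⟩, hx, hT⟩ := h.2 i hi
  have hxm : IsWeightedHomogeneous (w n) (fs i) ((1, 0) + m) :=
    hx ▸ isWeightedHomogeneous_sum_X_mul _ (fun _ => rfl) hm
  have hm_eq : (1, 0) + m = (d - i, i) := hxm.inj_right hne hfs
  have hTm : ((0, 1) + m : ℕ × ℕ) = (d - (i + 1), i + 1) := by
    simp only [Prod.ext_iff, Prod.fst_add, Prod.snd_add] at hm_eq ⊢
    omega
  exact hT ▸ hTm ▸ isWeightedHomogeneous_sum_X_mul _ (fun _ => rfl) hm

end IsDowngradedSeq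

end Downgraded

theorem downgraded_seq_nonzero_bihomogeneous (d : ℕ)
    (F : MvPolynomial (Fin n) k) (hF : F.IsHomogeneous d) (hF0 : F ≠ 0)
    (fs : ℕ → B k n) (co : ℕ → Fin n → B k n)
    (h : IsDowngradedSeq k n d F fs co) :
    ∀ i ≤ d, fs i ≠ 0 ∧ IsWeightedHomogeneous (w n) (fs i) (d - i, i) := by
  intro i hi
  refine ⟨h.ne_zero hF0 hi, ?_⟩
  induction i with
  | zero => simpa [h.1] using isWeightedHomogeneous_rename_inl hF
  | succ i ih =>
    exact h.isWeightedHomogeneous_succ hi (h.ne_zero hF0 (by omega)) (ih (by omega))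

end
end

section
/- Let B = k[x_1,...,x_n,T_1,...,T_n] with n ≥ 2, let ψ have rows (x_1,...,x_n), (T_1,...,T_n), and let f_0 = f, f_1,...,f_d be a downgraded sequence of a nonzero homogeneous polynomial f ∈ k[x_1,...,x_n] of degree d ≥ 1 (so f_i = (T_1...T_n)·∂f_{i-1} with (x_1...x_n)·∂f_{i-1} = f_{i-1}). Then for each 0 ≤ i ≤ d, the element f_0·T_n^i − x_n^i·f_i lies in I_2(ψ). -/
/-! Expanding along the column `cᵢ` witnessing the step `fᵢ = x·cᵢ`, `fᵢ₊₁ = T·cᵢ` gives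
`fᵢ Tₙ − xₙ fᵢ₊₁ = ∑ⱼ (xⱼTₙ − xₙTⱼ) cᵢⱼ ∈ I₂(ψ)`; chaining these one-step congruences yields
`f₀ Tₙⁱ ≡ xₙⁱ fᵢ`. -/

open MvPolynomial

noncomputable section

variable (k : Type*) [Field k] (n : ℕ)

theorem Ideal.mul_pow_sub_pow_mul_mem {R : Type*} [CommRing R] {I : Ideal R} {a b : R}
    {f : ℕ → R} {d : ℕ} (hstep : ∀ i < d, f i * a - b * f (i + 1) ∈ I) :
    ∀ i ≤ d, f 0 * a ^ i - b ^ i * f i ∈ I := by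
  intro i hi
  induction i with
  | zero => simp
  | succ i ih =>
    have hsplit : f 0 * a ^ (i + 1) - b ^ (i + 1) * f (i + 1)
        = (f 0 * a ^ i - b ^ i * f i) * a + b ^ i * (f i * a - b * f (i + 1)) := by ring
    rw [hsplit]
    exact I.add_mem (I.mul_mem_right _ (ih (by omega))) (I.mul_mem_left _ (hstep i hi))

theorem xv_mul_Tv_sub_mem_I2 (i j : Fin n) : xv k n i * Tv k n j - xv k n j * Tv k n i ∈ I2 k n :=
  Ideal.subset_span ⟨i, j, rfl⟩

theorem sum_xv_mul_mul_Tv_sub_xv_mul_sum_Tv_mul_mem_I2 (c : Fin n → B k n) (N : Fin n) :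
    (∑ j, xv k n j * c j) * Tv k n N - xv k n N * ∑ j, Tv k n j * c j ∈ I2 k n := by
  have hexpand : (∑ j, xv k n j * c j) * Tv k n N - xv k n N * ∑ j, Tv k n j * c j
      = ∑ j, (xv k n j * Tv k n N - xv k n N * Tv k n j) * c j := by
    simp only [Finset.sum_mul, Finset.mul_sum, ← Finset.sum_sub_distrib]
    exact Finset.sum_congr rfl fun j _ => by ring
  rw [hexpand]
  exact Ideal.sum_mem _ fun j _ => Ideal.mul_mem_right _ _ (xv_mul_Tv_sub_mem_I2 k n j N)

/-- The key congruence: `f₀·Tₙⁱ − xₙⁱ·fᵢ ∈ I₂(ψ)` for all `0 ≤ i ≤ d`. -/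
theorem downgraded_seq_congruence (hn : 2 ≤ n) (d : ℕ)
    (F : MvPolynomial (Fin n) k)
    (fs : ℕ → B k n) (co : ℕ → Fin n → B k n)
    (h : IsDowngradedSeq k n d F fs co) :
    ∀ i ≤ d,
      fs 0 * Tv k n ⟨n - 1, by omega⟩ ^ i - xv k n ⟨n - 1, by omega⟩ ^ i * fs i ∈ I2 k n := by
  refine Ideal.mul_pow_sub_pow_mul_mem fun i hi => ?_
  obtain ⟨-, hx, hT⟩ := h.2 i hi
  rw [← hx, hT]
  exact sum_xv_mul_mul_Tv_sub_xv_mul_sum_Tv_mul_mem_I2 k n (co i) _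

end
end

section
/- Let S = k[x_1,...,x_n] with n ≥ 2, n = (x_1,...,x_n), and R(n) the Rees algebra of n. Let n~ = nR(n) denote the extended ideal. Then for every i ≥ 1, the ordinary power n~^i equals the symbolic power n~^(i), i.e. n~^i has no embedded or excess associated primes beyond n~: n~^i = n~^(i). -/
open MvPolynomial

noncomputable section

set_option synthInstance.maxHeartbeats 1000000
set_option maxHeartbeats 1000000

variable (k : Type*) [Field k] (n : ℕ)

/-- The polynomial ring `S = k[x₁,…,xₙ]`. -/
abbrev Sring := MvPolynomial (Fin n) k

/-- The homogeneous maximal ideal `𝔫 = (x₁,…,xₙ)` of `S`. -/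
def nIdeal : Ideal (Sring k n) := Ideal.span (Set.range X)

/-- The Rees algebra `R(𝔫) = S[𝔫t] ⊆ S[t]`. -/
abbrev RA := ↥(reesAlgebra (nIdeal k n))

/-- The extended ideal `𝔫~ = 𝔫·R(𝔫)`. -/
def Pn : Ideal (RA k n) := Ideal.map (algebraMap (Sring k n) (RA k n)) (nIdeal k n)

namespace NTaux

variable {k n}

/-! ### degree lemmas -/

lemma degree_add (a b : Fin n →₀ ℕ) :
    Finsupp.degree (a + b) = Finsupp.degree a + Finsupp.degree b := by
  simp only [Finsupp.degree_eq_weight_one, map_add]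

lemma degree_single (i : Fin n) : Finsupp.degree (Finsupp.single i 1) = 1 := by
  exact Finsupp.degree_single i 1

/-! ### the power of nIdeal -/

/-- polynomials all of whose monomials have degree ≥ N, as an ideal -/
def Wid (N : ℕ) : Ideal (Sring k n) where
  carrier := {a | ∀ μ ∈ a.support, N ≤ Finsupp.degree μ}
  zero_mem' := by simp
  add_mem' := by
    intro a b ha hb μ hμ
    rcases Finset.mem_union.mp (MvPolynomial.support_add hμ) with h | h
    exacts [ha μ h, hb μ h]
  smul_mem' := by
    intro c a ha μ hμ
    have := MvPolynomial.support_mul c a hμ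
    rcases Finset.mem_add.mp this with ⟨μ₁, h₁, μ₂, h₂, rfl⟩
    calc N ≤ Finsupp.degree μ₂ := ha μ₂ h₂
    _ ≤ Finsupp.degree μ₁ + Finsupp.degree μ₂ := le_add_self
    _ = _ := (degree_add μ₁ μ₂).symm

lemma mem_Wid {N : ℕ} {a : Sring k n} :
    a ∈ Wid N ↔ ∀ μ ∈ a.support, N ≤ Finsupp.degree μ := Iff.rfl

lemma nIdeal_le_Wid_one : nIdeal k n ≤ Wid 1 := by
  rw [nIdeal, Ideal.span_le]
  rintro _ ⟨i, rfl⟩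
  intro μ hμ
  rw [MvPolynomial.support_X, Finset.mem_singleton] at hμ
  subst hμ
  simp [degree_single]

lemma pow_le_Wid (N : ℕ) : nIdeal k n ^ N ≤ Wid N := by
  induction N with
  | zero => intro a _ μ _; exact Nat.zero_le _
  | succ N ih =>
      rw [pow_succ]
      refine Ideal.mul_le.mpr fun r hr s hs => ?_
      intro μ hμ
      rcases Finset.mem_add.mp (MvPolynomial.support_mul r s hμ) with ⟨μ₁, h₁, μ₂, h₂, rfl⟩
      have := ih hr μ₁ h₁
      have := nIdeal_le_Wid_one hs μ₂ h₂
      rw [degree_add]; omega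

lemma monomial_mem_pow : ∀ (N : ℕ) (σ : Fin n →₀ ℕ), N ≤ Finsupp.degree σ →
    ∀ c : k, (monomial σ c : Sring k n) ∈ nIdeal k n ^ N := by
  intro N
  induction N with
  | zero => intro σ _ c; simp
  | succ N ih =>
      intro σ hσ c
      have hσ0 : σ ≠ 0 := by
        intro h0; rw [h0] at hσ; simp [map_zero] at hσ
      obtain ⟨i, hi⟩ := Finsupp.support_nonempty_iff.mpr hσ0
      have hle : Finsupp.single i 1 ≤ σ := by
        rw [Finsupp.single_le_iff]
        exact Nat.one_le_iff_ne_zero.mpr (Finsupp.mem_support_iff.mp hi)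
      have hsum : σ - Finsupp.single i 1 + Finsupp.single i 1 = σ := tsub_add_cancel_of_le hle
      have hdeg : Finsupp.degree (σ - Finsupp.single i 1) + 1 = Finsupp.degree σ := by
        conv_rhs => rw [← hsum]
        rw [degree_add, degree_single]
      have hmon : (monomial σ c : Sring k n)
          = monomial (σ - Finsupp.single i 1) c * X i := by
        rw [MvPolynomial.X, MvPolynomial.monomial_mul, mul_one, hsum]
      rw [hmon, pow_succ]
      exact Ideal.mul_mem_mul (ih _ (by omega) c)
        (Ideal.subset_span ⟨i, rfl⟩)

lemma mem_nPow {N : ℕ} {a : Sring k n} :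
    a ∈ nIdeal k n ^ N ↔ ∀ μ ∈ a.support, N ≤ Finsupp.degree μ := by
  constructor
  · exact fun h => pow_le_Wid N h
  · intro h
    have hs : (∑ μ ∈ a.support, monomial μ (coeff μ a)) ∈ nIdeal k n ^ N :=
      Ideal.sum_mem _ fun μ hμ => monomial_mem_pow N μ (h μ hμ) _
    rwa [← MvPolynomial.as_sum a] at hs


/-! ### the Hahn series valuation -/

variable (k n) in
/-- the regrading map: `x^μ ↦` Hahn single at `degree μ`. -/
def psi : Sring k n →+* HahnSeries ℤ (Sring k n) :=
  eval₂Hom ((HahnSeries.C : Sring k n →+* HahnSeries ℤ (Sring k n)).comp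
    (MvPolynomial.C : k →+* Sring k n)) fun i => HahnSeries.single 1 (X i)

lemma prod_single {ι : Type*} (s : Finset ι) (g : ι → ℤ) (v : ι → Sring k n) :
    (∏ i ∈ s, HahnSeries.single (g i) (v i))
      = HahnSeries.single (∑ i ∈ s, g i) (∏ i ∈ s, v i) := by
  classical
  induction s using Finset.induction_on with
  | empty => simp [HahnSeries.single_zero_one]
  | insert _ _ hx ih =>
      rw [Finset.prod_insert hx, Finset.prod_insert hx, Finset.sum_insert hx, ih,
        HahnSeries.single_mul_single]

lemma psi_monomial (m : Fin n →₀ ℕ) (c : k) :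
    psi k n (monomial m c) = HahnSeries.single ((Finsupp.degree m : ℕ) : ℤ) (monomial m c) := by
  rw [psi, eval₂Hom_monomial]
  have h1 : (m.prod fun i e => HahnSeries.single (1 : ℤ) (X i : Sring k n) ^ e)
      = HahnSeries.single ((Finsupp.degree m : ℕ) : ℤ) (m.prod fun i e => (X i : Sring k n) ^ e) := by
    rw [Finsupp.prod]
    have : ∀ i ∈ m.support, HahnSeries.single (1 : ℤ) (X i : Sring k n) ^ m i
        = HahnSeries.single ((m i : ℤ)) ((X i : Sring k n) ^ m i) := by
      intro i _; rw [HahnSeries.single_pow]; norm_num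
    rw [Finset.prod_congr rfl this, prod_single]
    congr 1
    rw [Finsupp.degree]
    push_cast
    exact congrArg _ (Nat.cast_sum (R := ℤ) m.support (fun i => m i)).symm
  rw [h1, RingHom.comp_apply]
  have : (HahnSeries.C : Sring k n →+* HahnSeries ℤ (Sring k n)) (MvPolynomial.C c)
      = HahnSeries.single (0 : ℤ) (MvPolynomial.C c) := rfl
  rw [this, HahnSeries.single_mul_single, zero_add, MvPolynomial.monomial_eq, Finsupp.prod]

lemma psi_coeff (a : Sring k n) (d : ℤ) (μ : Fin n →₀ ℕ) :
    ((psi k n a).coeff d).coeff μ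
      = if d = ((Finsupp.degree μ : ℕ) : ℤ) then a.coeff μ else 0 := by
  classical
  conv_lhs => rw [MvPolynomial.as_sum a]
  rw [map_sum]
  have hc : (∑ m ∈ a.support, psi k n (monomial m (coeff m a))).coeff d
      = ∑ m ∈ a.support, (psi k n (monomial m (coeff m a))).coeff d := by
    exact map_sum (⟨⟨fun x => HahnSeries.coeff x d, rfl⟩, fun x y => rfl⟩ :
      HahnSeries ℤ (Sring k n) →+ Sring k n) _ _
  rw [hc, MvPolynomial.coeff_sum]
  rw [Finset.sum_eq_single μ]
  · by_cases hμ : μ ∈ a.support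
    · rw [psi_monomial, HahnSeries.coeff_single]
      split_ifs <;> simp [MvPolynomial.coeff_monomial]
    · have h0 : a.coeff μ = 0 := by rwa [MvPolynomial.mem_support_iff, not_not] at hμ
      rw [psi_monomial, HahnSeries.coeff_single]
      split_ifs <;> simp [MvPolynomial.coeff_monomial, h0]
  · intro m _ hm
    rw [psi_monomial, HahnSeries.coeff_single]
    split_ifs <;> simp [MvPolynomial.coeff_monomial, hm]
  · intro hμ
    have h0 : a.coeff μ = 0 := by rwa [MvPolynomial.mem_support_iff, not_not] at hμ
    simp [h0]


variable (k n) in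
/-- the full regrading map on `S[t]`, `t ↦` Hahn single at `-1`. -/
def phi : Polynomial (Sring k n) →+* HahnSeries ℤ (Sring k n) :=
  Polynomial.eval₂RingHom (psi k n) (HahnSeries.single (-1 : ℤ) 1)

/-- an auxiliary coeff add hom -/
def cf (d : ℤ) : HahnSeries ℤ (Sring k n) →+ Sring k n :=
  ⟨⟨fun x => HahnSeries.coeff x d, rfl⟩, fun x y => rfl⟩

lemma phi_coeff (x : Polynomial (Sring k n)) (d : ℤ) :
    (phi k n x).coeff d = ∑ j ∈ x.support, (psi k n (x.coeff j)).coeff (d + j) := by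
  classical
  have : phi k n x = ∑ j ∈ x.support,
      psi k n (x.coeff j) * HahnSeries.single (-(j : ℤ)) 1 := by
    rw [phi, Polynomial.coe_eval₂RingHom, Polynomial.eval₂_eq_sum, Polynomial.sum]
    refine Finset.sum_congr rfl fun j _ => ?_
    rw [HahnSeries.single_pow, one_pow]
    norm_num
  rw [this]
  refine (map_sum (cf d) (fun j => psi k n (x.coeff j) * HahnSeries.single (-(j:ℤ)) 1)
    x.support).trans ?_
  refine Finset.sum_congr rfl fun j _ => ?_
  show (psi k n (x.coeff j) * HahnSeries.single (-(j : ℤ)) 1).coeff d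
      = (psi k n (x.coeff j)).coeff (d + j)
  have := HahnSeries.coeff_mul_single_add (r := (1 : Sring k n))
    (x := psi k n (x.coeff j)) (a := d + j) (b := -(j : ℤ))
  rw [add_neg_cancel_right] at this
  rw [this, mul_one]

lemma phi_coeff_coeff (x : Polynomial (Sring k n)) (j : ℕ) (μ : Fin n →₀ ℕ) :
    ((phi k n x).coeff (((Finsupp.degree μ : ℕ) : ℤ) - j)).coeff μ = (x.coeff j).coeff μ := by
  classical
  rw [phi_coeff, MvPolynomial.coeff_sum]
  rw [Finset.sum_eq_single j]
  · rw [psi_coeff]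
    rw [if_pos (by ring)]
  · intro m _ hm
    rw [psi_coeff, if_neg (by omega)]
  · intro hj
    have h0 : x.coeff j = 0 := by rwa [Polynomial.mem_support_iff, not_not] at hj
    simp [h0]


lemma coeff_mem_iff_phi (x : Polynomial (Sring k n)) (m : ℕ) :
    (∀ j, x.coeff j ∈ nIdeal k n ^ (m + j)) ↔
      ∀ w : ℤ, w < m → (phi k n x).coeff w = 0 := by
  constructor
  · intro h w hw
    rw [phi_coeff]
    refine Finset.sum_eq_zero fun j _ => ?_
    ext μ
    rw [psi_coeff, MvPolynomial.coeff_zero]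
    split_ifs with hd
    · by_contra hne
      have hμ : μ ∈ (x.coeff j).support := MvPolynomial.mem_support_iff.mpr hne
      have := mem_nPow.mp (h j) μ hμ
      omega
    · rfl
  · intro h j
    rw [mem_nPow]
    intro μ hμ
    by_contra hlt
    have hw : (((Finsupp.degree μ : ℕ) : ℤ) - j) < m := by omega
    have := phi_coeff_coeff x j μ
    rw [h _ hw] at this
    exact MvPolynomial.mem_support_iff.mp hμ (by simpa using this.symm)

lemma phi_ne_zero {x : Polynomial (Sring k n)} (hx : x ≠ 0) : phi k n x ≠ 0 := by
  intro h0
  apply hx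
  ext j μ
  have := phi_coeff_coeff x j μ
  rw [h0] at this
  simpa using this.symm

lemma le_orderTop_iff {y : HahnSeries ℤ (Sring k n)} {m : ℤ} :
    (m : WithTop ℤ) ≤ y.orderTop ↔ ∀ w : ℤ, w < m → y.coeff w = 0 := by
  constructor
  · intro h w hw
    exact HahnSeries.coeff_eq_zero_of_lt_orderTop (lt_of_lt_of_le (by exact_mod_cast hw) h)
  · intro h
    by_contra hlt
    rw [not_le] at hlt
    have hy : y ≠ 0 := by
      intro h0; rw [h0, HahnSeries.orderTop_zero] at hlt; exact (not_top_lt hlt)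
    have hord := HahnSeries.order_eq_orderTop_of_ne_zero hy
    rw [← hord] at hlt
    have hwlt : y.order < m := by exact_mod_cast hlt
    exact (mt HahnSeries.coeff_order_eq_zero.mp hy) (h _ hwlt)

lemma coeff_mem_iff_orderTop (x : Polynomial (Sring k n)) (m : ℕ) :
    (∀ j, x.coeff j ∈ nIdeal k n ^ (m + j)) ↔
      ((m : ℤ) : WithTop ℤ) ≤ (phi k n x).orderTop := by
  rw [coeff_mem_iff_phi, le_orderTop_iff]


/-! ### characterization of powers of Pn -/

lemma coeff_mul_mem {x y : Polynomial (Sring k n)} {i i' : ℕ}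
    (hx : ∀ j, x.coeff j ∈ nIdeal k n ^ (i + j))
    (hy : ∀ j, y.coeff j ∈ nIdeal k n ^ (i' + j)) :
    ∀ j, (x * y).coeff j ∈ nIdeal k n ^ (i + i' + j) := by
  intro j
  rw [Polynomial.coeff_mul]
  refine Ideal.sum_mem _ fun p hp => ?_
  have hps : p.1 + p.2 = j := Finset.HasAntidiagonal.mem_antidiagonal.mp hp
  have : nIdeal k n ^ (i + p.1) * nIdeal k n ^ (i' + p.2) = nIdeal k n ^ (i + i' + j) := by
    rw [← pow_add]; congr 1; omega
  rw [← this]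
  exact Ideal.mul_mem_mul (hx p.1) (hy p.2)

variable (k n) in
/-- the ideal of elements of the Rees algebra whose `j`-th coefficient is in `𝔫^(i+j)` -/
def Kid (i : ℕ) : Ideal (RA k n) where
  carrier := {r | ∀ j, (r : Polynomial (Sring k n)).coeff j ∈ nIdeal k n ^ (i + j)}
  zero_mem' := by intro j; simp
  add_mem' := by
    intro a b ha hb j
    have : ((a + b : RA k n) : Polynomial (Sring k n)) = (a : Polynomial (Sring k n)) + b := rfl
    rw [this, Polynomial.coeff_add]
    exact Ideal.add_mem _ (ha j) (hb j)
  smul_mem' := by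
    intro c r hr j
    have : ((c • r : RA k n) : Polynomial (Sring k n)) = (c : Polynomial (Sring k n)) * r := rfl
    rw [this]
    have hc : ∀ j, (c : Polynomial (Sring k n)).coeff j ∈ nIdeal k n ^ (0 + j) := by
      intro j; rw [zero_add]; exact (mem_reesAlgebra_iff _ _).mp c.2 j
    have := coeff_mul_mem hc hr j
    rwa [zero_add] at this

lemma mem_Kid {i : ℕ} {r : RA k n} :
    r ∈ Kid k n i ↔ ∀ j, (r : Polynomial (Sring k n)).coeff j ∈ nIdeal k n ^ (i + j) := Iff.rfl

lemma Pn_le_Kid_one : Pn k n ≤ Kid k n 1 := by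
  rw [Pn]
  refine le_trans (le_of_eq (Ideal.map_span (algebraMap (Sring k n) (RA k n)) (Set.range X))) ?_
  rw [Ideal.span_le]
  rintro _ ⟨_, ⟨l, rfl⟩, rfl⟩
  rw [SetLike.mem_coe, mem_Kid]
  intro j
  have hval : ((algebraMap (Sring k n) (RA k n) (X l) : RA k n) : Polynomial (Sring k n))
      = Polynomial.C (X l) := rfl
  rw [hval, Polynomial.coeff_C]
  split_ifs with h
  · subst h
    rw [add_zero, pow_one]
    exact Ideal.subset_span ⟨l, rfl⟩
  · exact Ideal.zero_mem _

lemma pow_le_Kid (i : ℕ) : Pn k n ^ i ≤ Kid k n i := by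
  induction i with
  | zero =>
      intro r _
      rw [mem_Kid]
      intro j
      rw [zero_add]
      exact (mem_reesAlgebra_iff _ _).mp r.2 j
  | succ i ih =>
      rw [pow_succ]
      refine Ideal.mul_le.mpr fun a ha b hb => ?_
      rw [mem_Kid]
      have : ((a * b : RA k n) : Polynomial (Sring k n)) = (a : Polynomial (Sring k n)) * b := rfl
      rw [this]
      exact coeff_mul_mem (ih ha) (Pn_le_Kid_one hb)

lemma RA_coe_sum {ι : Type*} (s : Finset ι) (f : ι → RA k n) :
    ((∑ j ∈ s, f j : RA k n) : Polynomial (Sring k n))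
      = ∑ j ∈ s, (f j : Polynomial (Sring k n)) := by
  classical
  induction s using Finset.induction_on with
  | empty => rfl
  | insert _ _ h ih => rw [Finset.sum_insert h, Finset.sum_insert h, ← ih]; rfl

lemma Kid_le_pow (i : ℕ) : Kid k n i ≤ Pn k n ^ i := by
  intro r hr
  rw [mem_Kid] at hr
  rw [Pn, ← Ideal.map_pow]
  have hterm : ∀ j : ℕ, ∀ a ∈ nIdeal k n ^ i * nIdeal k n ^ j,
      ∃ y ∈ Ideal.map (algebraMap (Sring k n) (RA k n)) (nIdeal k n ^ i),
        (y : Polynomial (Sring k n)) = Polynomial.monomial j a := by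
    intro j a ha
    refine Submodule.mul_induction_on ha ?_ ?_
    · intro b hb c hc
      have hcmem : (Polynomial.monomial j c : Polynomial (Sring k n))
          ∈ reesAlgebra (nIdeal k n) := by
        rw [mem_reesAlgebra_iff]
        intro u
        rw [Polynomial.coeff_monomial]
        split_ifs with h
        · subst h; exact hc
        · exact Ideal.zero_mem _
      refine ⟨algebraMap (Sring k n) (RA k n) b * ⟨Polynomial.monomial j c, hcmem⟩,
        Ideal.mul_mem_right _ _ (Ideal.mem_map_of_mem _ hb), ?_⟩
      have : ((algebraMap (Sring k n) (RA k n) b *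
          (⟨Polynomial.monomial j c, hcmem⟩ : RA k n) : RA k n) : Polynomial (Sring k n))
          = Polynomial.C b * Polynomial.monomial j c := rfl
      rw [this, Polynomial.C_mul_monomial]
    · rintro x y ⟨y₁, hy₁, hv₁⟩ ⟨y₂, hy₂, hv₂⟩
      refine ⟨y₁ + y₂, Ideal.add_mem _ hy₁ hy₂, ?_⟩
      have : ((y₁ + y₂ : RA k n) : Polynomial (Sring k n))
          = (y₁ : Polynomial (Sring k n)) + y₂ := rfl
      rw [this, hv₁, hv₂, map_add]
  have hchoice : ∀ j : ℕ, ∃ y ∈ Ideal.map (algebraMap (Sring k n) (RA k n)) (nIdeal k n ^ i),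
      (y : Polynomial (Sring k n))
        = Polynomial.monomial j ((r : Polynomial (Sring k n)).coeff j) := by
    intro j
    refine hterm j _ ?_
    rw [← pow_add]
    exact hr j
  choose y hy hyv using hchoice
  have hrsum : r = ∑ j ∈ (r : Polynomial (Sring k n)).support, y j := by
    apply Subtype.ext
    have : ((∑ j ∈ (r : Polynomial (Sring k n)).support, y j : RA k n)
        : Polynomial (Sring k n))
        = ∑ j ∈ (r : Polynomial (Sring k n)).support, (y j : Polynomial (Sring k n)) := by
      exact RA_coe_sum _ _
    rw [this]
    simp_rw [hyv]
    exact Polynomial.as_sum_support (r : Polynomial (Sring k n))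
  rw [hrsum]
  exact Ideal.sum_mem _ fun j _ => hy j

lemma mem_pow_iff {i : ℕ} {r : RA k n} :
    r ∈ Pn k n ^ i ↔ ∀ j, (r : Polynomial (Sring k n)).coeff j ∈ nIdeal k n ^ (i + j) :=
  ⟨fun h => pow_le_Kid i h, fun h => Kid_le_pow i (mem_Kid.mpr h)⟩

end NTaux

/-- Ordinary and symbolic powers of `𝔫~ = 𝔫R(𝔫)` coincide: `𝔫~ⁱ = 𝔫~⁽ⁱ⁾` for all `i ≥ 1`,
where the symbolic power (the `𝔫~`-primary component of `𝔫~ⁱ`, i.e. the saturation of `𝔫~ⁱ`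
at the prime `𝔫~`) is described as `{r | ∃ s ∉ 𝔫~, s·r ∈ 𝔫~ⁱ}`. -/


theorem n_tilde_symbolic_powers (hn : 2 ≤ n) :
    ∀ i : ℕ, 1 ≤ i → ∀ r : RA k n,
      r ∈ Pn k n ^ i ↔ ∃ s : RA k n, s ∉ Pn k n ∧ s * r ∈ Pn k n ^ i := by
  intro i _ r
  constructor
  · intro hr
    refine ⟨1, fun h1 => ?_, by rwa [one_mul]⟩
    have h0 := NTaux.mem_Kid.mp (NTaux.Pn_le_Kid_one h1) 0
    have hco : ((1 : RA k n) : Polynomial (Sring k n)).coeff 0 = 1 := by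
      rw [show ((1 : RA k n) : Polynomial (Sring k n)) = 1 from rfl, Polynomial.coeff_one]
      simp
    rw [hco] at h0
    have hsupp : (0 : Fin n →₀ ℕ) ∈ (1 : Sring k n).support := by
      rw [MvPolynomial.mem_support_iff]
      simp
    have := NTaux.mem_nPow.mp h0 0 hsupp
    simp [map_zero] at this
  · rintro ⟨s, hs, hsr⟩
    by_cases hr0 : r = 0
    · rw [hr0]; exact Submodule.zero_mem _
    have hs0 : s ≠ 0 := fun h => hs (h ▸ (Pn k n).zero_mem)
    have hsv : (s : Polynomial (Sring k n)) ≠ 0 := fun h => hs0 (Subtype.ext h)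
    have hrv : (r : Polynomial (Sring k n)) ≠ 0 := fun h => hr0 (Subtype.ext h)
    have hφs := NTaux.phi_ne_zero hsv
    have hφr := NTaux.phi_ne_zero hrv
    have h0s : (((0 : ℕ) : ℤ) : WithTop ℤ)
        ≤ (NTaux.phi k n (s : Polynomial (Sring k n))).orderTop := by
      rw [← NTaux.coeff_mem_iff_orderTop]
      intro j
      rw [Nat.zero_add]
      exact (mem_reesAlgebra_iff _ _).mp s.2 j
    have h1s : ¬ (((1 : ℕ) : ℤ) : WithTop ℤ)
        ≤ (NTaux.phi k n (s : Polynomial (Sring k n))).orderTop := by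
      intro h
      apply hs
      rw [← pow_one (Pn k n)]
      exact NTaux.mem_pow_iff.mpr ((NTaux.coeff_mem_iff_orderTop _ 1).mpr h)
    have hos := HahnSeries.order_eq_orderTop_of_ne_zero hφs
    have hor := HahnSeries.order_eq_orderTop_of_ne_zero hφr
    set os := (NTaux.phi k n (s : Polynomial (Sring k n))).order with hosdef
    have hos0 : os = 0 := by
      rw [← hos] at h0s h1s
      have h1 : (0 : ℤ) ≤ os := by exact_mod_cast h0s
      have h2 : ¬ (1 : ℤ) ≤ os := fun h => h1s (by exact_mod_cast h)
      omega
    have hmulne : NTaux.phi k n ((s * r : RA k n) : Polynomial (Sring k n)) ≠ 0 := by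
      have hv : ((s * r : RA k n) : Polynomial (Sring k n))
          = (s : Polynomial (Sring k n)) * r := rfl
      rw [hv, map_mul]
      exact mul_ne_zero hφs hφr
    have hi2 : ((i : ℤ) : WithTop ℤ)
        ≤ (NTaux.phi k n ((s * r : RA k n) : Polynomial (Sring k n))).orderTop :=
      (NTaux.coeff_mem_iff_orderTop _ i).mp (NTaux.mem_pow_iff.mp hsr)
    have hordmul : (NTaux.phi k n ((s * r : RA k n) : Polynomial (Sring k n))).order
        = os + (NTaux.phi k n (r : Polynomial (Sring k n))).order := by
      have hv : ((s * r : RA k n) : Polynomial (Sring k n))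
          = (s : Polynomial (Sring k n)) * r := rfl
      rw [hv, map_mul]
      have h3 := HahnSeries.orderTop_mul (NTaux.phi k n s) (NTaux.phi k n r)
      rw [← HahnSeries.order_eq_orderTop_of_ne_zero hφs, ← HahnSeries.order_eq_orderTop_of_ne_zero hφr,
        ← HahnSeries.order_eq_orderTop_of_ne_zero (mul_ne_zero hφs hφr), ← WithTop.coe_add,
        WithTop.coe_eq_coe] at h3
      exact h3
    rw [← HahnSeries.order_eq_orderTop_of_ne_zero hmulne, hordmul, hos0, zero_add, hor] at hi2
    exact NTaux.mem_pow_iff.mpr ((NTaux.coeff_mem_iff_orderTop _ i).mpr hi2)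

end
end

section
/- Let S = k[x_1,...,x_n] with n ≥ 2, f ∈ S homogeneous of degree d ≥ 1, R = S/(f) with homogeneous maximal ideal m. Then the defining ideal J of the Rees algebra R(m), as a quotient of B = S[T_1,...,T_n] (i.e., the kernel of B → R(m), T_i ↦ x_i t), satisfies J = (I_2(ψ) + (f)) : (x_1,...,x_n)^∞, the saturation of I_2(ψ)+(f) with respect to the ideal of x-variables, where ψ has rows (x_1,...,x_n), (T_1,...,T_n). -/
open MvPolynomial

noncomputable section

variable (k : Type*) [Field k] (n : ℕ)

set_option synthInstance.maxHeartbeats 1000000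
set_option maxHeartbeats 1000000

/-- The hypersurface ring `R = S/(f) = k[x₁,…,xₙ]/(f)`. -/
abbrev Rring (F : MvPolynomial (Fin n) k) := MvPolynomial (Fin n) k ⧸ Ideal.span {F}

/-- The `k`-algebra map `B = S[T₁,…,Tₙ] → R[t]`, `xᵢ ↦ x̄ᵢ`, `Tᵢ ↦ x̄ᵢ·t`,
whose image is the Rees algebra `R(𝔪)` of the maximal ideal `𝔪 = (x̄₁,…,x̄ₙ)` of `R`. -/
def toRees (F : MvPolynomial (Fin n) k) : B k n →ₐ[k] Polynomial (Rring k n F) :=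
  aeval (Sum.elim
    (fun i => Polynomial.C (Ideal.Quotient.mk (Ideal.span {F}) (X i)))
    (fun i => Polynomial.C (Ideal.Quotient.mk (Ideal.span {F}) (X i)) * Polynomial.X))

/-- The defining ideal `J = ker(B → R(𝔪))` of the Rees algebra `R(𝔪)` as a quotient of `B`. -/
def Jdef (F : MvPolynomial (Fin n) k) : Ideal (B k n) := RingHom.ker (toRees k n F)

/-! ### Auxiliary definitions and lemmas -/

/-- The weight function putting weight `0` on the `x`-variables and `1` on the `T`-variables. -/
def wt : Fin n ⊕ Fin n → ℕ := Sum.elim (fun _ => 0) (fun _ => 1)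

/-- The substitution `xᵢ ↦ xᵢ`, `Tᵢ ↦ xᵢ`. -/
def phi : B k n →ₐ[k] MvPolynomial (Fin n) k := aeval (Sum.elim X X)

lemma gen_mem_I2 (i j : Fin n) :
    X (Sum.inl i) * X (Sum.inr j) - X (Sum.inl j) * X (Sum.inr i) ∈ I2 k n :=
  Ideal.subset_span ⟨i, j, rfl⟩

private lemma ring_id1 {A : Type*} [CommRing A] (x T m r q : A) (s : ℕ) :
    q ^ s * (m * x) - r * x * T ^ s = x * (q ^ s * m - r * T ^ s) := by ring

private lemma ring_id2 {A : Type*} [CommRing A] (xi Ti xj Tj m r : A) (s : ℕ) :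
    xi ^ (s + 1) * (m * Tj) - r * xj * Ti ^ (s + 1)
      = (xi ^ s * m) * (xi * Tj - xj * Ti) + (xj * Ti) * (xi ^ s * m - r * Ti ^ s) := by ring

private lemma degree_add' {α : Type*} (x y : α →₀ ℕ) :
    Finsupp.degree (x + y) = Finsupp.degree x + Finsupp.degree y := by
  simp only [Finsupp.degree_eq_weight_one, map_add]

private lemma degree_single_one {α : Type*} (a : α) :
    Finsupp.degree (Finsupp.single a 1) = 1 := by
  simp only [Finsupp.degree_eq_weight_one, Finsupp.weight_apply]
  rw [Finsupp.sum_single_index] <;> simp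

/-- Induction for `ℕ`-valued finsupps, adding one variable at a time. -/
private lemma finsupp_add_single_induction {α : Type*} (P : (α →₀ ℕ) → Prop) (h0 : P 0)
    (hstep : ∀ (u : α →₀ ℕ) (a : α), P u → P (u + Finsupp.single a 1)) (u : α →₀ ℕ) : P u := by
  have key : ∀ (D : ℕ) (v : α →₀ ℕ), Finsupp.degree v ≤ D → P v := by
    intro D
    induction D with
    | zero =>
      intro v hv
      have h1 : v = 0 := by rw [← Finsupp.degree_eq_zero_iff]; omega
      exact h1 ▸ h0
    | succ D ih =>
      intro v hv
      by_cases hv0 : v = 0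
      · exact hv0 ▸ h0
      · obtain ⟨a, ha⟩ : ∃ a, v a ≠ 0 := by
          by_contra h; push_neg at h; exact hv0 (Finsupp.ext h)
        have hrec : (v - Finsupp.single a 1) + Finsupp.single a 1 = v := by
          ext b
          by_cases hb : a = b
          · subst hb
            simp only [Finsupp.add_apply, Finsupp.tsub_apply, Finsupp.single_eq_same]
            omega
          · simp [Finsupp.single_eq_of_ne' hb]
        have hdeg : Finsupp.degree (v - Finsupp.single a 1) ≤ D := by
          have h2 := congrArg Finsupp.degree hrec
          rw [degree_add', degree_single_one] at h2
          omega
        exact hrec ▸ hstep _ a (ih _ hdeg)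
  exact key (Finsupp.degree u) u le_rfl

lemma weight_single_one' (a : Fin n ⊕ Fin n) :
    Finsupp.weight (wt n) (Finsupp.single a 1) = wt n a := by
  rw [Finsupp.weight_apply, Finsupp.sum_single_index] <;> simp

lemma phi_monomial_zero (c : k) :
    rename Sum.inl (phi k n (monomial 0 c)) = monomial (0 : (Fin n ⊕ Fin n) →₀ ℕ) c := by
  simp [monomial_zero', phi, aeval_C, algebraMap_eq, rename_C]

/-- Key rewriting lemma modulo `I₂` for monomials. -/
lemma I2_mono (i : Fin n) (c : k) (u : (Fin n ⊕ Fin n) →₀ ℕ) :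
    xv k n i ^ (Finsupp.weight (wt n) u) * monomial u c -
      rename Sum.inl (phi k n (monomial u c)) * Tv k n i ^ (Finsupp.weight (wt n) u)
      ∈ I2 k n := by
  induction u using finsupp_add_single_induction with
  | h0 =>
    rw [map_zero, pow_zero, pow_zero, one_mul, mul_one, phi_monomial_zero, sub_self]
    exact zero_mem _
  | hstep u a hu =>
    have hw : Finsupp.weight (wt n) (u + Finsupp.single a 1)
        = Finsupp.weight (wt n) u + wt n a := by
      rw [map_add, weight_single_one']
    rw [monomial_add_single, pow_one, hw]
    have hphi : phi k n (monomial u c * X a) = phi k n (monomial u c) * Sum.elim X X a := by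
      rw [map_mul]; simp [phi, aeval_X]
    cases a with
    | inl j =>
      have hwa : wt n (Sum.inl j) = 0 := rfl
      rw [hwa, add_zero, hphi]
      simp only [Sum.elim_inl]
      rw [map_mul, rename_X]
      rw [show (xv k n i ^ (Finsupp.weight (wt n)) u * (monomial u c * X (Sum.inl j)) -
          rename Sum.inl (phi k n (monomial u c)) * X (Sum.inl j) *
            Tv k n i ^ (Finsupp.weight (wt n)) u)
        = X (Sum.inl j) * (xv k n i ^ (Finsupp.weight (wt n)) u * monomial u c -
            rename Sum.inl (phi k n (monomial u c)) * Tv k n i ^ (Finsupp.weight (wt n)) u)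
        from by ring]
      exact Ideal.mul_mem_left _ _ hu
    | inr j =>
      have hwa : wt n (Sum.inr j) = 1 := rfl
      rw [hwa, hphi]
      simp only [Sum.elim_inr]
      rw [map_mul, rename_X]
      rw [show (xv k n i ^ ((Finsupp.weight (wt n)) u + 1) * (monomial u c * X (Sum.inr j)) -
          rename Sum.inl (phi k n (monomial u c)) * X (Sum.inl j) *
            Tv k n i ^ ((Finsupp.weight (wt n)) u + 1))
        = (xv k n i ^ (Finsupp.weight (wt n)) u * monomial u c) *
            (xv k n i * Tv k n j - xv k n j * Tv k n i)
          + (X (Sum.inl j) * Tv k n i) *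
            (xv k n i ^ (Finsupp.weight (wt n)) u * monomial u c -
              rename Sum.inl (phi k n (monomial u c)) * Tv k n i ^ (Finsupp.weight (wt n)) u)
        from by simp only [xv, Tv]; ring]
      exact add_mem (Ideal.mul_mem_left _ _ (gen_mem_I2 k n i j)) (Ideal.mul_mem_left _ _ hu)

/-- `toRees` of a monomial. -/
lemma toRees_mono (F : MvPolynomial (Fin n) k) (c : k) (u : (Fin n ⊕ Fin n) →₀ ℕ) :
    toRees k n F (monomial u c)
      = Polynomial.C (Ideal.Quotient.mk (Ideal.span {F}) (phi k n (monomial u c)))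
          * Polynomial.X ^ (Finsupp.weight (wt n) u) := by
  induction u using finsupp_add_single_induction with
  | h0 =>
    rw [map_zero, pow_zero, mul_one]
    simp only [monomial_zero']
    rw [show (toRees k n F) (C c) = algebraMap k _ c from aeval_C _ c]
    rw [show phi k n (C c) = C c from by simp [phi, aeval_C, algebraMap_eq]]
    rw [Polynomial.algebraMap_apply, IsScalarTower.algebraMap_apply k (MvPolynomial (Fin n) k)
      (Rring k n F), Ideal.Quotient.algebraMap_eq, algebraMap_eq]
  | hstep u a hu =>
    have hw : Finsupp.weight (wt n) (u + Finsupp.single a 1)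
        = Finsupp.weight (wt n) u + wt n a := by
      rw [map_add, weight_single_one']
    rw [monomial_add_single, pow_one, hw, map_mul, hu, map_mul]
    have hphi : phi k n (X a) = Sum.elim X X a := by simp [phi, aeval_X]
    rw [hphi]
    cases a with
    | inl j =>
      have : toRees k n F (X (Sum.inl j))
          = Polynomial.C (Ideal.Quotient.mk (Ideal.span {F}) (X j)) := by
        simp [toRees, aeval_X]
      rw [this]
      simp only [Sum.elim_inl, map_mul]
      rw [show wt n (Sum.inl j) = 0 from rfl, add_zero]
      ring
    | inr j =>
      have : toRees k n F (X (Sum.inr j))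
          = Polynomial.C (Ideal.Quotient.mk (Ideal.span {F}) (X j)) * Polynomial.X := by
        simp [toRees, aeval_X]
      rw [this]
      simp only [Sum.elim_inr, map_mul]
      rw [show wt n (Sum.inr j) = 1 from rfl]
      ring

/-- Key rewriting lemma modulo `I₂` for `T`-homogeneous polynomials. -/
lemma I2_hom (i : Fin n) {s : ℕ} {p : B k n} (hp : p.IsWeightedHomogeneous (wt n) s) :
    xv k n i ^ s * p - rename Sum.inl (phi k n p) * Tv k n i ^ s ∈ I2 k n := by
  have hsum : ∑ d ∈ p.support, (xv k n i ^ s * monomial d (coeff d p)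
      - rename Sum.inl (phi k n (monomial d (coeff d p))) * Tv k n i ^ s)
      = xv k n i ^ s * p - rename Sum.inl (phi k n p) * Tv k n i ^ s := by
    rw [Finset.sum_sub_distrib, ← Finset.mul_sum, ← Finset.sum_mul, ← map_sum, ← map_sum,
      ← as_sum]
  rw [← hsum]
  refine Submodule.sum_mem _ fun d hd => ?_
  have hwd : Finsupp.weight (wt n) d = s := hp (mem_support_iff.mp hd)
  rw [← hwd]
  exact I2_mono k n i (coeff d p) d

/-- `toRees` of a `T`-homogeneous polynomial. -/
lemma toRees_hom (F : MvPolynomial (Fin n) k) {s : ℕ} {p : B k n}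
    (hp : p.IsWeightedHomogeneous (wt n) s) :
    toRees k n F p
      = Polynomial.C (Ideal.Quotient.mk (Ideal.span {F}) (phi k n p)) * Polynomial.X ^ s := by
  calc toRees k n F p = ∑ d ∈ p.support, toRees k n F (monomial d (coeff d p)) := by
        conv_lhs => rw [as_sum p]
        exact map_sum _ _ _
    _ = ∑ d ∈ p.support, Polynomial.C (Ideal.Quotient.mk (Ideal.span {F})
          (phi k n (monomial d (coeff d p)))) * Polynomial.X ^ s :=
        Finset.sum_congr rfl fun d hd => by
          rw [toRees_mono, hp (mem_support_iff.mp hd)]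
    _ = Polynomial.C (Ideal.Quotient.mk (Ideal.span {F}) (phi k n p)) * Polynomial.X ^ s := by
        rw [← Finset.sum_mul, ← map_sum, ← map_sum, ← map_sum, ← as_sum]

lemma weight_le_sum (d : (Fin n ⊕ Fin n) →₀ ℕ) :
    Finsupp.weight (wt n) d ≤ d.sum fun _ e => e := by
  rw [Finsupp.weight_apply]
  refine Finset.sum_le_sum fun i _ => ?_
  cases i <;> simp [wt]

/-- Decomposition of an element of `B` into its `T`-homogeneous components. -/
lemma g_eq_sum (g : B k n) :
    g = ∑ s ∈ Finset.range (g.totalDegree + 1), weightedHomogeneousComponent (wt n) s g := by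
  conv_lhs => rw [← sum_weightedHomogeneousComponent (wt n) g]
  apply finsum_eq_finset_sum_of_support_subset
  intro s hs
  simp only [Function.mem_support] at hs
  have hex : ∃ d ∈ g.support, Finsupp.weight (wt n) d = s := by
    by_contra h; push_neg at h
    exact hs (weightedHomogeneousComponent_eq_zero' s g h)
  obtain ⟨d, hd, rfl⟩ := hex
  simp only [Finset.coe_range, Set.mem_Iio, Nat.lt_succ_iff]
  exact le_trans (weight_le_sum n d) (le_totalDegree hd)

lemma comp_high_eq_zero (g : B k n) {s : ℕ} (hs : g.totalDegree < s) :
    weightedHomogeneousComponent (wt n) s g = 0 := by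
  refine weightedHomogeneousComponent_eq_zero' s g fun d hd => ?_
  have h1 := le_trans (weight_le_sum n d) (le_totalDegree hd)
  omega

/-- If `g` is in the kernel of `toRees`, then each `T`-homogeneous component, with the
`T`-variables substituted by the corresponding `x`-variables, lies in `(F)`. -/
lemma phi_comp_mem (F : MvPolynomial (Fin n) k) (g : B k n) (hg : toRees k n F g = 0) (s : ℕ) :
    phi k n (weightedHomogeneousComponent (wt n) s g) ∈ Ideal.span {F} := by
  by_cases hs : s ≤ g.totalDegree
  · have h0 : (0 : Polynomial (Rring k n F))
        = ∑ s' ∈ Finset.range (g.totalDegree + 1),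
            Polynomial.C (Ideal.Quotient.mk (Ideal.span {F})
              (phi k n (weightedHomogeneousComponent (wt n) s' g))) * Polynomial.X ^ s' := by
      rw [← hg]
      conv_lhs => rw [g_eq_sum k n g]
      rw [map_sum]
      exact Finset.sum_congr rfl fun s' _ =>
        toRees_hom k n F (weightedHomogeneousComponent_isWeightedHomogeneous s' g)
    have h1 := congrArg (fun P => Polynomial.coeff P s) h0
    simp only [Polynomial.coeff_zero, Polynomial.finset_sum_coeff, Polynomial.coeff_C_mul,
      Polynomial.coeff_X_pow, mul_ite, mul_one, mul_zero, Finset.sum_ite_eq,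
      Finset.mem_range, Nat.lt_succ_iff, hs, if_true] at h1
    rw [← Ideal.Quotient.eq_zero_iff_mem]
    exact h1.symm
  · rw [comp_high_eq_zero k n g (by omega), map_zero]
    exact zero_mem _

/-- The key forward computation : `xᵢ^(deg g) · g ∈ I₂ + (f)` for `g` in the kernel. -/
lemma key_fwd (F : MvPolynomial (Fin n) k) (g : B k n) (hg : toRees k n F g = 0) (i : Fin n) :
    xv k n i ^ g.totalDegree * g
      ∈ I2 k n ⊔ Ideal.span {(rename Sum.inl F : B k n)} := by
  have hdecomp := congrArg (fun q => xv k n i ^ g.totalDegree * q) (g_eq_sum k n g)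
  simp only [Finset.mul_sum] at hdecomp
  rw [hdecomp]
  refine Submodule.sum_mem _ fun s hs => ?_
  have hsle : s ≤ g.totalDegree := Nat.lt_succ_iff.mp (Finset.mem_range.mp hs)
  set c := weightedHomogeneousComponent (wt n) s g with hc
  have h1 : xv k n i ^ s * c - rename Sum.inl (phi k n c) * Tv k n i ^ s ∈ I2 k n :=
    I2_hom k n i (weightedHomogeneousComponent_isWeightedHomogeneous s g)
  have h3 : (rename Sum.inl F : B k n) ∣ rename Sum.inl (phi k n c) :=
    map_dvd _ (Ideal.mem_span_singleton.mp (phi_comp_mem k n F g hg s))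
  have he : xv k n i ^ g.totalDegree * c
      = xv k n i ^ (g.totalDegree - s) *
          (xv k n i ^ s * c - rename Sum.inl (phi k n c) * Tv k n i ^ s)
        + (xv k n i ^ (g.totalDegree - s) * Tv k n i ^ s) * rename Sum.inl (phi k n c) := by
    have hTs : g.totalDegree - s + s = g.totalDegree := by omega
    calc xv k n i ^ g.totalDegree * c = xv k n i ^ (g.totalDegree - s + s) * c := by rw [hTs]
      _ = _ := by rw [pow_add]; ring
  rw [he]
  refine add_mem (Submodule.mem_sup_left (Ideal.mul_mem_left _ _ h1))
    (Submodule.mem_sup_right (Ideal.mem_span_singleton.mpr (h3.mul_left _)))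

/-- Pigeonhole : `(f₁,…,f_ν)^(νN+1) ⊆ (f₁^(N+1),…,f_ν^(N+1))`. -/
lemma span_range_pow_le {R : Type*} [CommRing R] {ν : ℕ} (f : Fin ν → R) (N : ℕ) :
    Ideal.span (Set.range f) ^ (ν * N + 1) ≤ Ideal.span (Set.range fun i => f i ^ (N + 1)) := by
  classical
  rw [Ideal.span, Submodule.span_pow, Submodule.span_le]
  intro x hx
  rw [Set.mem_pow] at hx
  obtain ⟨gf, hgf⟩ := hx
  choose idx hidx using fun t => (gf t).2
  have hcard : Fintype.card (Fin ν) * N < Fintype.card (Fin (ν * N + 1)) := by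
    simp only [Fintype.card_fin]; omega
  obtain ⟨j, hj⟩ := Fintype.exists_lt_card_fiber_of_mul_lt_card (f := idx) hcard
  have hx' : x = ∏ t, f (idx t) := by
    rw [← hgf, List.prod_ofFn]
    exact Finset.prod_congr rfl fun t _ => (hidx t).symm
  have hsplit : x = (∏ t ∈ Finset.univ.filter (fun t => idx t = j), f (idx t)) *
      ∏ t ∈ Finset.univ.filter (fun t => ¬ idx t = j), f (idx t) := by
    rw [hx']
    exact (Finset.prod_filter_mul_prod_filter_not Finset.univ (fun t => idx t = j) _).symm
  have hpow : ∏ t ∈ Finset.univ.filter (fun t => idx t = j), f (idx t)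
      = f j ^ (Finset.univ.filter (fun t => idx t = j)).card := by
    rw [Finset.prod_congr rfl (fun t ht => by rw [(Finset.mem_filter.mp ht).2]),
      Finset.prod_const]
  have hjcard : N < (Finset.univ.filter (fun t => idx t = j)).card := by
    simpa using hj
  obtain ⟨r, hr⟩ : ∃ r, (Finset.univ.filter (fun t => idx t = j)).card = (N + 1) + r :=
    ⟨(Finset.univ.filter (fun t => idx t = j)).card - (N + 1), by omega⟩
  have hfin : x = (f j ^ r * ∏ t ∈ Finset.univ.filter (fun t => ¬ idx t = j), f (idx t)) *
      f j ^ (N + 1) := by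
    rw [hsplit, hpow, hr, pow_add]; ring
  rw [hfin]
  exact Ideal.mul_mem_left _ _ (Ideal.subset_span ⟨j, rfl⟩)

/-- `X i` is prime in a multivariate polynomial ring over a field. -/
lemma prime_X_mv (i : Fin n) : Prime (X i : MvPolynomial (Fin n) k) := by
  obtain ⟨ν, rfl⟩ : ∃ ν, n = ν + 1 := ⟨n - 1, by have := i.pos; omega⟩
  have h0 : Prime (X (0 : Fin (ν + 1)) : MvPolynomial (Fin (ν + 1)) k) := by
    rw [← MulEquiv.prime_iff (MvPolynomial.finSuccEquiv k ν).toMulEquiv]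
    simpa [MvPolynomial.finSuccEquiv_X_zero] using
      (Polynomial.prime_X : Prime (Polynomial.X (R := MvPolynomial (Fin ν) k)))
  rw [← MulEquiv.prime_iff (MvPolynomial.renameEquiv k (Equiv.swap i 0)).toMulEquiv]
  simpa [MvPolynomial.renameEquiv, Equiv.swap_apply_left] using h0

/-- The crucial UFD cancellation : if `F` divides `xᵢ^m·c` for two distinct variables,
then `F` divides `c`. -/
lemma dvd_cancel (hn : 2 ≤ n) (F c' : MvPolynomial (Fin n) k) (m : ℕ)
    (h0 : F ∣ X (⟨0, by omega⟩ : Fin n) ^ m * c')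
    (h1 : F ∣ X (⟨1, by omega⟩ : Fin n) ^ m * c') : F ∣ c' := by
  letI : GCDMonoid (MvPolynomial (Fin n) k) :=
    UniqueFactorizationMonoid.toGCDMonoid (MvPolynomial (Fin n) k)
  set x0 : MvPolynomial (Fin n) k := X ⟨0, by omega⟩ with hx0def
  set x1 : MvPolynomial (Fin n) k := X ⟨1, by omega⟩ with hx1def
  have hgcd : F ∣ gcd (x0 ^ m * c') (x1 ^ m * c') := dvd_gcd h0 h1
  have hassoc := gcd_mul_right' c' (x0 ^ m) (x1 ^ m)
  have hFd : F ∣ gcd (x0 ^ m) (x1 ^ m) * c' := hgcd.trans hassoc.dvd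
  have hunit : IsUnit (gcd (x0 ^ m) (x1 ^ m)) := by
    by_contra hu
    have hne : gcd (x0 ^ m) (x1 ^ m) ≠ 0 := by
      intro h
      rw [gcd_eq_zero_iff] at h
      exact pow_ne_zero m (X_ne_zero _) h.1
    obtain ⟨p, hpirr, hpd⟩ := WfDvdMonoid.exists_irreducible_factor hu hne
    have hp : Prime p := UniqueFactorizationMonoid.irreducible_iff_prime.mp hpirr
    have hd0 : p ∣ x0 := hp.dvd_of_dvd_pow (hpd.trans (gcd_dvd_left _ _))
    have hd1 : p ∣ x1 := hp.dvd_of_dvd_pow (hpd.trans (gcd_dvd_right _ _))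
    have hx0irr : Irreducible x0 := (prime_X_mv k n _).irreducible
    have hdvd01 : x0 ∣ x1 := ((hpirr.associated_of_dvd hx0irr hd0).symm.dvd).trans hd1
    rw [hx0def, hx1def, MvPolynomial.X_dvd_X] at hdvd01
    exact absurd hdvd01 (by simp [Fin.ext_iff])
  obtain ⟨u, hu⟩ := hunit
  rw [← hu] at hFd
  exact Units.dvd_mul_left.mp hFd

lemma toRees_xv (F : MvPolynomial (Fin n) k) (i : Fin n) :
    toRees k n F (xv k n i) = Polynomial.C (Ideal.Quotient.mk (Ideal.span {F}) (X i)) := by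
  simp [toRees, xv, aeval_X]

lemma I2_le_Jdef (F : MvPolynomial (Fin n) k) : I2 k n ≤ Jdef k n F := by
  refine Ideal.span_le.mpr ?_
  rintro p ⟨i, j, rfl⟩
  have : toRees k n F (xv k n i * Tv k n j - xv k n j * Tv k n i) = 0 := by
    simp only [map_sub, map_mul, toRees, xv, Tv, aeval_X, Sum.elim_inl, Sum.elim_inr]
    ring
  exact this

lemma renF_mem_Jdef (F : MvPolynomial (Fin n) k) : (rename Sum.inl F : B k n) ∈ Jdef k n F := by
  show toRees k n F (rename Sum.inl F) = 0
  have h1 : toRees k n F (rename Sum.inl F)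
      = aeval (fun i => Polynomial.C (Ideal.Quotient.mk (Ideal.span {F}) (X i))) F := by
    rw [toRees, aeval_rename]
    congr
  set ψ : MvPolynomial (Fin n) k →ₐ[k] Polynomial (Rring k n F) :=
    Polynomial.CAlgHom.comp (Ideal.Quotient.mkₐ k (Ideal.span {F})) with hψ
  have h2 : aeval (fun i => Polynomial.C (Ideal.Quotient.mk (Ideal.span {F}) (X i))) F
      = ψ F := by
    have h3 : ψ.comp (aeval X) = aeval fun i => ψ (X i) := comp_aeval (B := Polynomial (Rring k n F)) X ψ
    have h4 : (aeval X) F = F := by rw [aeval_X_left]; rfl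
    have h5 : ψ F = (ψ.comp (aeval X)) F := by simp [h4]
    rw [h5, h3]
    congr
  rw [h1, h2, hψ]
  simp only [AlgHom.comp_apply, Ideal.Quotient.mkₐ_eq_mk, Polynomial.CAlgHom]
  rw [Ideal.Quotient.eq_zero_iff_mem.mpr (Ideal.mem_span_singleton_self F)]
  simp

/-- The defining ideal of `R(𝔪)` is the saturation `(I₂(ψ) + (f)) : (x₁,…,xₙ)^∞`. -/
theorem J_eq_saturation (hn : 2 ≤ n) (d : ℕ) (hd : 1 ≤ d)
    (F : MvPolynomial (Fin n) k) (hF : F.IsHomogeneous d) (hF0 : F ≠ 0) :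
    Jdef k n F =
      ⨆ m : ℕ, Submodule.colon (I2 k n ⊔ Ideal.span {(rename Sum.inl F : B k n)})
        (((Ideal.span (Set.range (xv k n))) ^ m : Ideal (B k n)) : Set (B k n)) := by
  set K : Ideal (B k n) := I2 k n ⊔ Ideal.span {(rename Sum.inl F : B k n)} with hK
  apply le_antisymm
  · -- J ⊆ saturation
    intro g hg
    have hg0 : toRees k n F g = 0 := hg
    have hKi : ∀ i : Fin n, xv k n i ^ (g.totalDegree + 1) * g ∈ K := by
      intro i
      have h1 : xv k n i ^ (g.totalDegree + 1) * g
          = xv k n i * (xv k n i ^ g.totalDegree * g) := by rw [pow_succ]; ring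
      rw [h1]
      exact Ideal.mul_mem_left _ _ (key_fwd k n F g hg0 i)
    have hmem : g ∈ Submodule.colon K
        (((Ideal.span (Set.range (xv k n))) ^ (n * g.totalDegree + 1) : Ideal (B k n)) : Set (B k n)) := by
      rw [Submodule.mem_colon]
      intro p hp
      have hp' : p ∈ Ideal.span (Set.range fun i => xv k n i ^ (g.totalDegree + 1)) :=
        span_range_pow_le (xv k n) g.totalDegree hp
      rw [smul_eq_mul]
      clear hp
      induction hp' using Submodule.span_induction with
      | mem x hx =>
        obtain ⟨i, rfl⟩ := hx
        rw [mul_comm]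
        exact hKi i
      | zero => rw [mul_zero]; exact zero_mem _
      | add x y hx hy ihx ihy => rw [mul_add]; exact add_mem ihx ihy
      | smul a x hx ihx => rw [mul_smul_comm]; exact Submodule.smul_mem _ _ ihx
    exact le_iSup (fun m => Submodule.colon K (((Ideal.span (Set.range (xv k n))) ^ m : Ideal (B k n)) : Set (B k n)))
      (n * g.totalDegree + 1) hmem
  · -- saturation ⊆ J
    refine iSup_le fun m => ?_
    intro g hg
    have hKJ : K ≤ Jdef k n F :=
      sup_le (I2_le_Jdef k n F)
        (Ideal.span_le.mpr (Set.singleton_subset_iff.mpr (renF_mem_Jdef k n F)))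
    show toRees k n F g = 0
    have hxi : ∀ i : Fin n, toRees k n F g *
        Polynomial.C ((Ideal.Quotient.mk (Ideal.span {F}) (X i)) ^ m) = 0 := by
      intro i
      have h1 : g • (xv k n i ^ m) ∈ K :=
        Submodule.mem_colon.mp hg _ (Ideal.pow_mem_pow (Ideal.subset_span (Set.mem_range_self i)) m)
      have h2 : toRees k n F (g * xv k n i ^ m) = 0 := hKJ (smul_eq_mul g (xv k n i ^ m) ▸ h1)
      rw [map_mul, map_pow, toRees_xv, ← map_pow] at h2
      exact h2
    apply Polynomial.ext
    intro s
    rw [Polynomial.coeff_zero]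
    obtain ⟨c', hc'⟩ := Ideal.Quotient.mk_surjective ((toRees k n F g).coeff s)
    have hdvd : ∀ i : Fin n, F ∣ X i ^ m * c' := by
      intro i
      have h3 := congrArg (fun P => P.coeff s) (hxi i)
      simp only [Polynomial.coeff_mul_C, Polynomial.coeff_zero] at h3
      rw [← hc', ← map_pow, ← map_mul] at h3
      rw [mul_comm] at h3
      exact Ideal.mem_span_singleton.mp (Ideal.Quotient.eq_zero_iff_mem.mp h3)
    have hc : F ∣ c' := dvd_cancel k n hn F c' m (hdvd ⟨0, by omega⟩) (hdvd ⟨1, by omega⟩)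
    rw [← hc']
    exact Ideal.Quotient.eq_zero_iff_mem.mpr (Ideal.mem_span_singleton.mpr hc)

end
end

section
/- Let S = k[x_1,...,x_n] with n ≥ 2, f ∈ S homogeneous of degree d ≥ 1, and R = S/(f) with homogeneous maximal ideal m. Then the defining ideal of the Rees algebra R(m) as a quotient of B = S[T_1,...,T_n] is J = I_2(ψ) + (f_0, f_1, ..., f_d), where ψ has rows (x_1,...,x_n), (T_1,...,T_n) and f_0 = f, f_1, ..., f_d is a downgraded sequence of f (f_i = (T_1...T_n)·∂f_{i-1} with (x_1...x_n)·∂f_{i-1} = f_{i-1}). -/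
open MvPolynomial

noncomputable section

variable (k : Type*) [Field k] (n : ℕ)

set_option synthInstance.maxHeartbeats 1000000
set_option maxHeartbeats 1000000

-- auxiliary
/-- `ψ : B → S[t]`, `xᵢ ↦ C (X i)`, `Tᵢ ↦ C (X i) * t`. -/
def psiM : B k n →ₐ[k] Polynomial (MvPolynomial (Fin n) k) :=
  aeval (Sum.elim (fun i => Polynomial.C (X i)) (fun i => Polynomial.C (X i) * Polynomial.X))

/-- total exponent vector -/
def tot (μ : (Fin n ⊕ Fin n) →₀ ℕ) : Fin n →₀ ℕ :=
  Finsupp.equivFunOnFinite.symm (fun i => μ (Sum.inl i) + μ (Sum.inr i))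

/-- T-degree -/
def tdeg (μ : (Fin n ⊕ Fin n) →₀ ℕ) : ℕ := ∑ i, μ (Sum.inr i)

@[simp] lemma tot_apply (μ : (Fin n ⊕ Fin n) →₀ ℕ) (i : Fin n) :
    tot n μ i = μ (Sum.inl i) + μ (Sum.inr i) := rfl

lemma tot_add (μ ν : (Fin n ⊕ Fin n) →₀ ℕ) : tot n (μ + ν) = tot n μ + tot n ν := by
  ext i; simp; ring

lemma tdeg_add (μ ν : (Fin n ⊕ Fin n) →₀ ℕ) : tdeg n (μ + ν) = tdeg n μ + tdeg n ν := by
  simp [tdeg, Finset.sum_add_distrib]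

lemma tot_single_inl (i : Fin n) (e : ℕ) :
    tot n (Finsupp.single (Sum.inl i) e) = Finsupp.single i e := by
  ext j; by_cases h : i = j <;> simp [Finsupp.single_apply, h]

lemma tot_single_inr (i : Fin n) (e : ℕ) :
    tot n (Finsupp.single (Sum.inr i) e) = Finsupp.single i e := by
  ext j; by_cases h : i = j <;> simp [Finsupp.single_apply, h]

lemma tdeg_single_inl (i : Fin n) (e : ℕ) : tdeg n (Finsupp.single (Sum.inl i) e) = 0 := by
  simp [tdeg, Finsupp.single_apply]

lemma tdeg_single_inr (i : Fin n) (e : ℕ) : tdeg n (Finsupp.single (Sum.inr i) e) = e := by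
  simp [tdeg, Finsupp.single_apply]

lemma psiM_monomial (μ : (Fin n ⊕ Fin n) →₀ ℕ) (c : k) :
    psiM k n (monomial μ c)
      = Polynomial.C (monomial (tot n μ) c) * Polynomial.X ^ tdeg n μ := by
  induction μ using Finsupp.induction with
  | zero =>
      have h1 : tot n 0 = 0 := by ext; simp
      have h2 : tdeg n 0 = 0 := by simp [tdeg]
      rw [h1, h2, monomial_zero', pow_zero, mul_one, psiM, aeval_C]
      simp [MvPolynomial.algebraMap_eq, Polynomial.algebraMap_apply]
  | single_add s e ν hs he ih =>
      rw [monomial_single_add, map_mul, map_pow, tot_add, tdeg_add]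
      cases s with
      | inl i =>
          simp only [psiM, aeval_X, Sum.elim_inl] at *
          rw [ih, tot_single_inl, tdeg_single_inl]
          rw [← Polynomial.C_pow, show (monomial (Finsupp.single i e + tot n ν) c)
            = X i ^ e * monomial (tot n ν) c from monomial_single_add]
          push_cast [Polynomial.C_mul]
          ring
      | inr i =>
          simp only [psiM, aeval_X, Sum.elim_inr] at *
          rw [ih, tot_single_inr, tdeg_single_inr]
          rw [mul_pow, ← Polynomial.C_pow, show (monomial (Finsupp.single i e + tot n ν) c)
            = X i ^ e * monomial (tot n ν) c from monomial_single_add]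
          push_cast [Polynomial.C_mul]
          ring

lemma psiM_eq_sum (g : B k n) :
    psiM k n g = ∑ μ ∈ g.support,
      Polynomial.C (monomial (tot n μ) (coeff μ g)) * Polynomial.X ^ tdeg n μ := by
  conv_lhs => rw [← g.support_sum_monomial_coeff]
  rw [map_sum]
  exact Finset.sum_congr rfl fun μ _ => psiM_monomial k n μ _

lemma coeff_coeff_psiM (g : B k n) (b : ℕ) (γ : Fin n →₀ ℕ) :
    coeff γ ((psiM k n g).coeff b)
      = ∑ μ ∈ g.support, if tdeg n μ = b ∧ tot n μ = γ then coeff μ g else 0 := by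
  rw [psiM_eq_sum, Polynomial.finset_sum_coeff]
  rw [show (fun μ => Polynomial.coeff (Polynomial.C (monomial (tot n μ) (coeff μ g)) *
      Polynomial.X ^ tdeg n μ) b) = fun μ =>
      if b = tdeg n μ then monomial (tot n μ) (coeff μ g) else 0 from funext fun μ => by
    simp [Polynomial.coeff_C_mul, Polynomial.coeff_X_pow]]
  rw [MvPolynomial.coeff_sum]
  refine Finset.sum_congr rfl fun μ _ => ?_
  split_ifs with h1 h2 h2 <;> simp_all [coeff_monomial]

/-- The basic swap: exchanging an `x j` with a `T i` inside a monomial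
stays in the same class mod `I₂`. -/
lemma swap_mem (μ : (Fin n ⊕ Fin n) →₀ ℕ) (i j : Fin n)
    (hi : μ (Sum.inr i) ≠ 0) (hj : μ (Sum.inl j) ≠ 0) :
    (monomial μ 1 : B k n) -
      monomial (μ - Finsupp.single (Sum.inl j) 1 - Finsupp.single (Sum.inr i) 1
        + Finsupp.single (Sum.inl i) 1 + Finsupp.single (Sum.inr j) 1) 1 ∈ I2 k n := by
  set ν := μ - Finsupp.single (Sum.inl j) 1 - Finsupp.single (Sum.inr i) 1 with hν
  have hμ : μ = ν + Finsupp.single (Sum.inl j) 1 + Finsupp.single (Sum.inr i) 1 := by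
    ext s
    simp only [hν, Finsupp.add_apply, Finsupp.tsub_apply, Finsupp.single_apply]
    rcases s with a | a <;> by_cases h1 : i = a <;> by_cases h2 : j = a <;>
      simp_all <;> omega
  have key : (monomial μ 1 : B k n) -
      monomial (ν + Finsupp.single (Sum.inl i) 1 + Finsupp.single (Sum.inr j) 1) 1
      = monomial ν 1 * (xv k n j * Tv k n i - xv k n i * Tv k n j) := by
    rw [hμ]
    simp only [xv, Tv, X, mul_sub, monomial_mul, mul_one]
    ring_nf
    rw [show ν + Finsupp.single (Sum.inl j) 1 + Finsupp.single (Sum.inr i) 1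
        = ν + (Finsupp.single (Sum.inl j) 1 + Finsupp.single (Sum.inr i) 1) by rw [add_assoc],
      show ν + Finsupp.single (Sum.inl i) 1 + Finsupp.single (Sum.inr j) 1
        = ν + (Finsupp.single (Sum.inl i) 1 + Finsupp.single (Sum.inr j) 1) by rw [add_assoc]]
  rw [hμ] at hi hj ⊢
  rw [← hμ, key]
  exact Ideal.mul_mem_left _ _ (Ideal.subset_span ⟨j, i, rfl⟩)

lemma sum_split (i j : Fin n) (hij : i ≠ j) (f : Fin n → ℕ) :
    ∑ l, f l = f i + f j + ∑ l ∈ (Finset.univ.erase i).erase j, f l := by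
  rw [← Finset.add_sum_erase _ f (Finset.mem_univ i)]
  rw [← Finset.add_sum_erase _ f (Finset.mem_erase.mpr ⟨Ne.symm hij, Finset.mem_univ j⟩)]
  ring

lemma connect_aux : ∀ (N : ℕ) (μ μ' : (Fin n ⊕ Fin n) →₀ ℕ),
    (∑ l, ((μ (Sum.inr l) - μ' (Sum.inr l)) + (μ' (Sum.inr l) - μ (Sum.inr l)))) ≤ N →
    tot n μ = tot n μ' → tdeg n μ = tdeg n μ' →
    (monomial μ 1 : B k n) - monomial μ' 1 ∈ I2 k n := by
  intro N
  induction N with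
  | zero =>
      intro μ μ' hm htot htd
      have hz : ∀ l, μ (Sum.inr l) = μ' (Sum.inr l) := by
        intro l
        have := Finset.sum_eq_zero_iff.mp (Nat.le_zero.mp hm) l (Finset.mem_univ l)
        omega
      have : μ = μ' := by
        ext s
        rcases s with a | a
        · have h1 := Finsupp.ext_iff.mp htot a
          simp only [tot_apply] at h1
          have := hz a; omega
        · exact hz a
      rw [this, sub_self]
      exact zero_mem _
  | succ N ih =>
      intro μ μ' hm htot htd
      by_cases heq : μ = μ'
      · rw [heq, sub_self]; exact zero_mem _
      -- find a coordinate where the inr parts differ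
      have hex : ∃ i0, μ (Sum.inr i0) ≠ μ' (Sum.inr i0) := by
        by_contra hc
        push_neg at hc
        apply heq
        ext s
        rcases s with a | a
        · have h1 := Finsupp.ext_iff.mp htot a
          simp only [tot_apply] at h1
          have := hc a; omega
        · exact hc a
      obtain ⟨i0, hi0⟩ := hex
      have hsum : ∑ l, μ (Sum.inr l) = ∑ l, μ' (Sum.inr l) := htd
      -- get i with μ (inr i) > μ' (inr i)
      have hgt : ∃ i, μ' (Sum.inr i) < μ (Sum.inr i) := by
        by_contra hc
        push_neg at hc
        rcases Nat.lt_or_ge (μ (Sum.inr i0)) (μ' (Sum.inr i0)) with h | h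
        · have : ∑ l, μ (Sum.inr l) < ∑ l, μ' (Sum.inr l) :=
            Finset.sum_lt_sum (fun l _ => hc l) ⟨i0, Finset.mem_univ i0, h⟩
          omega
        · exact hi0 (le_antisymm (hc i0) h)
      obtain ⟨i, hi⟩ := hgt
      have hlt : ∃ j, μ (Sum.inr j) < μ' (Sum.inr j) := by
        by_contra hc
        push_neg at hc
        have : ∑ l, μ' (Sum.inr l) < ∑ l, μ (Sum.inr l) :=
          Finset.sum_lt_sum (fun l _ => hc l) ⟨i, Finset.mem_univ i, hi⟩
        omega
      obtain ⟨j, hj⟩ := hlt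
      have hij : i ≠ j := fun h => by rw [h] at hi; omega
      have htotj := Finsupp.ext_iff.mp htot j
      simp only [tot_apply] at htotj
      have hxj : μ (Sum.inl j) ≠ 0 := by omega
      have hTi : μ (Sum.inr i) ≠ 0 := by omega
      set μ₂ := μ - Finsupp.single (Sum.inl j) 1 - Finsupp.single (Sum.inr i) 1
        + Finsupp.single (Sum.inl i) 1 + Finsupp.single (Sum.inr j) 1 with hμ₂
      have hval : ∀ s : Fin n ⊕ Fin n, μ₂ s =
          (μ s - (if Sum.inl j = s then 1 else 0) - (if Sum.inr i = s then 1 else 0))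
          + (if Sum.inl i = s then 1 else 0) + (if Sum.inr j = s then 1 else 0) := by
        intro s
        simp only [hμ₂, Finsupp.add_apply, Finsupp.tsub_apply, Finsupp.single_apply]
      have hji : j ≠ i := Ne.symm hij
      have v1 : μ₂ (Sum.inr i) = μ (Sum.inr i) - 1 := by simp [hval, hji]
      have v2 : μ₂ (Sum.inr j) = μ (Sum.inr j) + 1 := by simp [hval, hij]
      have v3 : ∀ l, l ≠ i → l ≠ j → μ₂ (Sum.inr l) = μ (Sum.inr l) := by
        intro l h1 h2; simp [hval, Ne.symm h1, Ne.symm h2]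
      have v4 : μ₂ (Sum.inl i) = μ (Sum.inl i) + 1 := by simp [hval, hji]
      have v5 : μ₂ (Sum.inl j) = μ (Sum.inl j) - 1 := by simp [hval, hij]
      have v6 : ∀ a, a ≠ i → a ≠ j → μ₂ (Sum.inl a) = μ (Sum.inl a) := by
        intro a h1 h2; simp [hval, Ne.symm h1, Ne.symm h2]
      have hswap := swap_mem k n μ i j hTi hxj
      rw [← hμ₂] at hswap
      have htot2 : tot n μ₂ = tot n μ := by
        ext a
        simp only [tot_apply]
        by_cases ha : a = i
        · subst ha; rw [v1, v4]; omega
        · by_cases hb : a = j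
          · subst hb; rw [v2, v5]; omega
          · rw [v3 a ha hb, v6 a ha hb]
      have htd2 : tdeg n μ₂ = tdeg n μ := by
        unfold tdeg
        rw [sum_split n i j hij (fun l => μ₂ (Sum.inr l)),
          sum_split n i j hij (fun l => μ (Sum.inr l))]
        have ht : ∑ l ∈ (Finset.univ.erase i).erase j, μ₂ (Sum.inr l)
            = ∑ l ∈ (Finset.univ.erase i).erase j, μ (Sum.inr l) := by
          refine Finset.sum_congr rfl fun l hl => ?_
          simp only [Finset.mem_erase] at hl
          exact v3 l hl.2.1 hl.1
        rw [ht, v1, v2]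
        omega
      have hmeas : (∑ l, ((μ₂ (Sum.inr l) - μ' (Sum.inr l)) +
          (μ' (Sum.inr l) - μ₂ (Sum.inr l)))) ≤ N := by
        rw [sum_split n i j hij] at hm ⊢
        have ht : ∑ l ∈ (Finset.univ.erase i).erase j,
            ((μ₂ (Sum.inr l) - μ' (Sum.inr l)) + (μ' (Sum.inr l) - μ₂ (Sum.inr l)))
            = ∑ l ∈ (Finset.univ.erase i).erase j,
            ((μ (Sum.inr l) - μ' (Sum.inr l)) + (μ' (Sum.inr l) - μ (Sum.inr l))) := by
          refine Finset.sum_congr rfl fun l hl => ?_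
          simp only [Finset.mem_erase] at hl
          rw [v3 l hl.2.1 hl.1]
        rw [ht, v1, v2]
        omega
      have hrec := ih μ₂ μ' hmeas (htot2.trans htot) (htd2.trans htd)
      have : (monomial μ 1 : B k n) - monomial μ' 1
          = ((monomial μ 1 : B k n) - monomial μ₂ 1) + (monomial μ₂ 1 - monomial μ' 1) := by
        ring
      rw [this]
      exact add_mem hswap hrec

lemma mem_I2_of_psiM_eq_zero : ∀ (N : ℕ) (g : B k n), g.support.card ≤ N →
    psiM k n g = 0 → g ∈ I2 k n := by
  intro N
  induction N with
  | zero =>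
      intro g hc hz
      have : g.support = ∅ := Finset.card_eq_zero.mp (Nat.le_zero.mp hc)
      rw [MvPolynomial.support_eq_empty.mp this]
      exact zero_mem _
  | succ N ih =>
      intro g hc hz
      by_cases hg : g = 0
      · rw [hg]; exact zero_mem _
      obtain ⟨μ, hμ⟩ := (MvPolynomial.support_nonempty.mpr hg)
      have hcμ : coeff μ g ≠ 0 := mem_support_iff.mp hμ
      have hsum : ∑ ν ∈ g.support,
          (if tdeg n ν = tdeg n μ ∧ tot n ν = tot n μ then coeff ν g else 0) = 0 := by
        rw [← coeff_coeff_psiM, hz]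
        simp
      have hex : ∃ ν ∈ g.support, ν ≠ μ ∧ tdeg n ν = tdeg n μ ∧ tot n ν = tot n μ := by
        by_contra hcon
        push_neg at hcon
        have heval : ∑ ν ∈ g.support,
            (if tdeg n ν = tdeg n μ ∧ tot n ν = tot n μ then coeff ν g else 0)
            = coeff μ g := by
          rw [Finset.sum_eq_single_of_mem μ hμ (fun ν hν hne => if_neg (fun hand => hcon ν hν hne hand.1 hand.2)),
            if_pos ⟨rfl, rfl⟩]
        exact hcμ (heval ▸ hsum)
      obtain ⟨ν, hνs, hνμ, htd, htot⟩ := hex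
      set c := coeff μ g with hcdef
      set g' := g - monomial μ c + monomial ν c with hg'
      have hdiffmem : g - g' ∈ I2 k n := by
        have hdiff : g - g' = C c * (monomial μ 1 - monomial ν 1) := by
          rw [hg', mul_sub, C_mul_monomial, C_mul_monomial, mul_one]
          ring
        rw [hdiff]
        exact Ideal.mul_mem_left _ _ (connect_aux k n _ μ ν le_rfl htot.symm htd.symm)
      have hz' : psiM k n g' = 0 := by
        rw [hg', map_add, map_sub, psiM_monomial, psiM_monomial, htd, htot, hz]
        ring
      have hsub : g'.support ⊆ g.support.erase μ := by
        intro ξ hξ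
        rw [Finset.mem_erase]
        have hcoeff : coeff ξ g' = coeff ξ g - (if μ = ξ then c else 0)
            + (if ν = ξ then c else 0) := by
          simp [hg', coeff_monomial, coeff_sub, coeff_add]
        have hne : ξ ≠ μ := by
          rintro rfl
          rw [if_pos rfl, if_neg hνμ] at hcoeff
          exact mem_support_iff.mp hξ (by rw [hcoeff]; ring)
        refine ⟨hne, ?_⟩
        by_contra hnot
        have h1 : coeff ξ g = 0 := notMem_support_iff.mp hnot
        have hξν : ν ≠ ξ := by rintro rfl; exact hnot hνs
        rw [if_neg (fun hh => hne hh.symm), if_neg hξν, h1] at hcoeff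
        exact mem_support_iff.mp hξ (by rw [hcoeff]; ring)
      have hcard : g'.support.card ≤ N := by
        have h1 := Finset.card_le_card hsub
        have h2 : (g.support.erase μ).card < g.support.card :=
          Finset.card_erase_lt_of_mem hμ
        omega
      have hmain : g = (g - g') + g' := by ring
      rw [hmain]
      exact add_mem hdiffmem (ih g' hcard hz')

lemma psiM_xv (i : Fin n) : psiM k n (xv k n i) = Polynomial.C (X i) := by
  simp [psiM, xv]

lemma psiM_Tv (i : Fin n) : psiM k n (Tv k n i) = Polynomial.C (X i) * Polynomial.X := by
  simp [psiM, Tv]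

lemma psiM_rename (p : MvPolynomial (Fin n) k) :
    psiM k n (rename Sum.inl p) = Polynomial.C p := by
  rw [psiM, aeval_rename]
  have hcomp : (Sum.elim (fun i => Polynomial.C (X i : MvPolynomial (Fin n) k))
      (fun i => Polynomial.C (X i : MvPolynomial (Fin n) k) * Polynomial.X) ∘ Sum.inl)
      = fun i => Polynomial.C (X i : MvPolynomial (Fin n) k) := rfl
  rw [hcomp]
  induction p using MvPolynomial.induction_on with
  | C a => simp [MvPolynomial.algebraMap_eq, Polynomial.algebraMap_apply]
  | add p q hp hq => rw [map_add, hp, hq, map_add]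
  | mul_X p i hp => rw [map_mul, hp, aeval_X, map_mul]

lemma degree_eq_sum (γ : Fin n →₀ ℕ) : γ.degree = ∑ i, γ i :=
  Finset.sum_subset (Finset.subset_univ _)
    (fun _ _ h => Finsupp.notMem_support_iff.mp h)

lemma mon_lift : ∀ (m : ℕ) (γ : Fin n →₀ ℕ), m ≤ γ.degree →
    ∃ μ, tot n μ = γ ∧ tdeg n μ = m := by
  intro m
  induction m with
  | zero =>
      intro γ _
      refine ⟨Finsupp.mapDomain Sum.inl γ, ?_, ?_⟩
      · ext i
        rw [tot_apply, Finsupp.mapDomain_apply Sum.inl_injective,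
          Finsupp.mapDomain_notin_range _ _ (by simp), add_zero]
      · unfold tdeg
        rw [Finset.sum_eq_zero]
        intro i _
        rw [Finsupp.mapDomain_notin_range _ _ (by simp)]
  | succ m ih =>
      intro γ hm
      have hpos : 0 < γ.degree := lt_of_lt_of_le (Nat.succ_pos m) hm
      have hex : ∃ i, γ i ≠ 0 := by
        by_contra hc
        push_neg at hc
        have hγ : γ = 0 := by ext i; exact hc i
        rw [hγ] at hpos
        simp [Finsupp.degree] at hpos
      obtain ⟨i, hi⟩ := hex
      set γ' := γ - Finsupp.single i 1 with hγ'
      have hval : ∀ j, γ' j = γ j - (if i = j then 1 else 0) := fun j => by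
        simp [hγ', Finsupp.single_apply]
      have hdeg : γ'.degree + 1 = γ.degree := by
        rw [degree_eq_sum, degree_eq_sum,
          ← Finset.add_sum_erase _ _ (Finset.mem_univ i),
          ← Finset.add_sum_erase _ _ (Finset.mem_univ i)]
        have ht : ∑ j ∈ Finset.univ.erase i, γ' j = ∑ j ∈ Finset.univ.erase i, γ j :=
          Finset.sum_congr rfl fun j hj => by
            rw [hval, if_neg (Ne.symm (Finset.mem_erase.mp hj).1), Nat.sub_zero]
        rw [ht, hval i, if_pos rfl]
        omega
      obtain ⟨μ', h1, h2⟩ := ih γ' (by omega)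
      refine ⟨μ' + Finsupp.single (Sum.inr i) 1, ?_, ?_⟩
      · rw [tot_add, h1, tot_single_inr]
        ext j
        rw [Finsupp.add_apply, hval j, Finsupp.single_apply]
        by_cases h : i = j
        · subst h; simp; omega
        · simp [h]
      · rw [tdeg_add, h2, tdeg_single_inr]

lemma poly_lift : ∀ (N : ℕ) (p : MvPolynomial (Fin n) k) (m : ℕ), p.support.card ≤ N →
    (∀ γ ∈ p.support, m ≤ γ.degree) →
    ∃ H : B k n, psiM k n H = Polynomial.C p * Polynomial.X ^ m := by
  intro N
  induction N with
  | zero =>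
      intro p m hc _
      have : p.support = ∅ := Finset.card_eq_zero.mp (Nat.le_zero.mp hc)
      refine ⟨0, ?_⟩
      rw [MvPolynomial.support_eq_empty.mp this]
      simp
  | succ N ih =>
      intro p m hc hs
      by_cases hp : p = 0
      · exact ⟨0, by simp [hp]⟩
      obtain ⟨γ, hγ⟩ := MvPolynomial.support_nonempty.mpr hp
      obtain ⟨μ, hμ1, hμ2⟩ := mon_lift n m γ (hs γ hγ)
      set p' := p - monomial γ (coeff γ p) with hp'
      have hsub : p'.support ⊆ p.support.erase γ := by
        intro ξ hξ
        rw [Finset.mem_erase]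
        have hcoeff : coeff ξ p' = coeff ξ p - (if γ = ξ then coeff γ p else 0) := by
          simp [hp', coeff_monomial]
        have hne : ξ ≠ γ := by
          rintro rfl
          rw [if_pos rfl] at hcoeff
          exact mem_support_iff.mp hξ (by rw [hcoeff]; ring)
        refine ⟨hne, ?_⟩
        by_contra hnot
        rw [if_neg (fun hh => hne hh.symm), notMem_support_iff.mp hnot] at hcoeff
        exact mem_support_iff.mp hξ (by rw [hcoeff]; ring)
      have hcard : p'.support.card ≤ N := by
        have h1 := Finset.card_le_card hsub
        have h2 : (p.support.erase γ).card < p.support.card :=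
          Finset.card_erase_lt_of_mem hγ
        omega
      obtain ⟨H', hH'⟩ := ih p' m hcard
        (fun ξ hξ => hs ξ (Finset.mem_of_mem_erase (hsub hξ)))
      refine ⟨H' + monomial μ (coeff γ p), ?_⟩
      rw [map_add, hH', psiM_monomial, hμ1, hμ2, hp', map_sub]
      ring

lemma support_coeff_psi (g : B k n) (b : ℕ) (γ : Fin n →₀ ℕ)
    (h : coeff γ ((psiM k n g).coeff b) ≠ 0) : b ≤ γ.degree := by
  rw [coeff_coeff_psiM] at h
  obtain ⟨μ, hμs, hμ⟩ := Finset.exists_ne_zero_of_sum_ne_zero h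
  split_ifs at hμ with hcond
  · obtain ⟨h1, h2⟩ := hcond
    rw [← h2, degree_eq_sum, ← h1]
    unfold tdeg
    exact Finset.sum_le_sum fun i _ => by rw [tot_apply]; omega
  · exact absurd rfl hμ

lemma comp_mul_homog (d : ℕ) (F : MvPolynomial (Fin n) k) (hF : F.IsHomogeneous d)
    (p : MvPolynomial (Fin n) k) (e : ℕ) :
    homogeneousComponent (d + e) (F * p) = F * homogeneousComponent e p := by
  conv_lhs => rw [← sum_homogeneousComponent p]
  rw [Finset.mul_sum, map_sum]
  rw [Finset.sum_congr rfl (fun i (_ : i ∈ Finset.range (p.totalDegree + 1)) =>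
    homogeneousComponent_of_mem ((mem_homogeneousSubmodule _ _).mpr
      (hF.mul (homogeneousComponent_isHomogeneous i p))))]
  have hcond : ∀ i, (d + e = d + i) = (i = e) := fun i => by
    rw [eq_iff_iff]; omega
  simp_rw [hcond]
  rw [Finset.sum_ite_eq' (Finset.range (p.totalDegree + 1))]
  split_ifs with hmem
  · rfl
  · rw [homogeneousComponent_eq_zero, mul_zero]
    simpa using hmem

lemma low_comp_zero (b d : ℕ) (F : MvPolynomial (Fin n) k) (hF : F.IsHomogeneous d)
    (hF0 : F ≠ 0) (p : MvPolynomial (Fin n) k)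
    (hs : ∀ γ ∈ (F * p).support, b ≤ γ.degree) :
    ∀ γ ∈ p.support, b - d ≤ γ.degree := by
  intro γ hγ
  by_contra hlt
  push_neg at hlt
  have he : homogeneousComponent γ.degree p ≠ 0 := fun hzero => by
    have := coeff_homogeneousComponent γ.degree p γ
    rw [hzero, if_pos rfl] at this
    exact mem_support_iff.mp hγ (by rw [← this]; simp)
  have h2 : F * homogeneousComponent γ.degree p = 0 := by
    rw [← comp_mul_homog k n d F hF p γ.degree]
    apply homogeneousComponent_eq_zero'
    intro ξ hξ
    have := hs ξ hξ
    omega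
  rcases mul_eq_zero.mp h2 with h | h
  · exact hF0 h
  · exact he h

lemma psi_fs (d : ℕ) (F : MvPolynomial (Fin n) k) (fs : ℕ → B k n) (co : ℕ → Fin n → B k n)
    (h : IsDowngradedSeq k n d F fs co) :
    ∀ i, i ≤ d → psiM k n (fs i) = Polynomial.C F * Polynomial.X ^ i := by
  intro i
  induction i with
  | zero => intro _; rw [h.1, psiM_rename, pow_zero, mul_one]
  | succ i ih =>
      intro hle
      obtain ⟨-, h1, h2⟩ := h.2 i (by omega)
      rw [h2, map_sum]
      have hterm : ∀ j : Fin n, psiM k n (Tv k n j * co i j)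
          = Polynomial.X * psiM k n (xv k n j * co i j) := fun j => by
        rw [map_mul, map_mul, psiM_Tv, psiM_xv]; ring
      rw [Finset.sum_congr rfl fun j _ => hterm j, ← Finset.mul_sum, ← map_sum, h1,
        ih (by omega)]
      ring

lemma toRees_eq (F : MvPolynomial (Fin n) k) (g : B k n) :
    toRees k n F g = Polynomial.map (Ideal.Quotient.mk (Ideal.span {F})) (psiM k n g) := by
  have hcomp : toRees k n F
      = (Polynomial.mapAlgHom (Ideal.Quotient.mkₐ k (Ideal.span {F}))).comp (psiM k n) := by
    apply MvPolynomial.algHom_ext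
    intro s
    cases s <;>
      simp [toRees, psiM, Polynomial.coe_mapAlgHom, Polynomial.map_mul, Polynomial.map_C,
        Polynomial.map_X, Ideal.Quotient.mkₐ_eq_mk]
  rw [hcomp, AlgHom.comp_apply, Polynomial.coe_mapAlgHom]
  rfl

lemma mem_Jdef_iff (F : MvPolynomial (Fin n) k) (g : B k n) :
    g ∈ Jdef k n F ↔ ∀ b, F ∣ (psiM k n g).coeff b := by
  rw [Jdef, RingHom.mem_ker, toRees_eq, Polynomial.ext_iff]
  refine forall_congr' fun b => ?_
  rw [Polynomial.coeff_map, Polynomial.coeff_zero, Ideal.Quotient.eq_zero_iff_mem,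
    Ideal.mem_span_singleton]

lemma lift_exists (d : ℕ) (F : MvPolynomial (Fin n) k) (hF : F.IsHomogeneous d)
    (hF0 : F ≠ 0) (fs : ℕ → B k n)
    (hfs : ∀ i, i ≤ d → psiM k n (fs i) = Polynomial.C F * Polynomial.X ^ i)
    (b : ℕ) (c : MvPolynomial (Fin n) k) (hdvd : F ∣ c)
    (hsupp : ∀ γ ∈ c.support, b ≤ γ.degree) :
    ∃ L ∈ Ideal.span {g | ∃ i ≤ d, g = fs i},
      psiM k n L = Polynomial.C c * Polynomial.X ^ b := by
  obtain ⟨p, rfl⟩ := hdvd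
  by_cases hb : b ≤ d
  · refine ⟨fs b * rename Sum.inl p,
      Ideal.mul_mem_right _ _ (Ideal.subset_span ⟨b, hb, rfl⟩), ?_⟩
    rw [map_mul, hfs b hb, psiM_rename, map_mul]
    ring
  · push_neg at hb
    obtain ⟨H, hH⟩ := poly_lift k n p.support.card p (b - d) le_rfl
      (low_comp_zero k n b d F hF hF0 p hsupp)
    refine ⟨fs d * H,
      Ideal.mul_mem_right _ _ (Ideal.subset_span ⟨d, le_rfl, rfl⟩), ?_⟩
    rw [map_mul, hfs d le_rfl, hH, map_mul]
    have hbd : d + (b - d) = b := by omega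
    rw [mul_mul_mul_comm, ← pow_add, hbd]

/-- Main theorem: the defining ideal of `R(𝔪)` as a quotient of `B` is
`J = I₂(ψ) + (f₀, f₁, …, f_d)` for any downgraded sequence `f₀ = f, f₁, …, f_d` of `f`. -/
theorem J_eq_I2_sup_downgraded (hn : 2 ≤ n) (d : ℕ) (hd : 1 ≤ d)
    (F : MvPolynomial (Fin n) k) (hF : F.IsHomogeneous d) (hF0 : F ≠ 0)
    (fs : ℕ → B k n) (co : ℕ → Fin n → B k n)
    (h : IsDowngradedSeq k n d F fs co) :
    Jdef k n F = I2 k n ⊔ Ideal.span {g | ∃ i ≤ d, g = fs i} := by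
  have hfs := psi_fs k n d F fs co h
  apply le_antisymm
  · -- J ⊆ I₂ ⊔ (f₀, …, f_d)
    intro g hg
    rw [mem_Jdef_iff] at hg
    have hLb : ∀ b : ℕ, ∃ L, L ∈ Ideal.span {g | ∃ i ≤ d, g = fs i} ∧
        psiM k n L = Polynomial.C ((psiM k n g).coeff b) * Polynomial.X ^ b := by
      intro b
      obtain ⟨L, h1, h2⟩ := lift_exists k n d F hF hF0 fs hfs b _ (hg b)
        (fun γ hγ => support_coeff_psi k n g b γ (mem_support_iff.mp hγ))
      exact ⟨L, h1, h2⟩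
    choose L hL1 hL2 using hLb
    set g' := ∑ b ∈ (psiM k n g).support, L b with hg'
    have hg'mem : g' ∈ Ideal.span {g | ∃ i ≤ d, g = fs i} :=
      Ideal.sum_mem _ fun b _ => hL1 b
    have hker : psiM k n (g - g') = 0 := by
      rw [map_sub, hg', map_sum, Finset.sum_congr rfl fun b _ => hL2 b, sub_eq_zero]
      exact (psiM k n g).as_sum_support_C_mul_X_pow
    have hI2 : g - g' ∈ I2 k n :=
      mem_I2_of_psiM_eq_zero k n (g - g').support.card (g - g') le_rfl hker
    have hg_eq : g = (g - g') + g' := by ring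
    rw [hg_eq]
    exact Submodule.add_mem _ (Ideal.mem_sup_left hI2) (Ideal.mem_sup_right hg'mem)
  · -- I₂ ⊔ (f₀, …, f_d) ⊆ J
    rw [sup_le_iff]
    constructor
    · rw [I2, Ideal.span_le]
      rintro p ⟨i, j, rfl⟩
      rw [SetLike.mem_coe, mem_Jdef_iff]
      intro b
      have hz : psiM k n (xv k n i * Tv k n j - xv k n j * Tv k n i) = 0 := by
        rw [map_sub, map_mul, map_mul, psiM_xv, psiM_Tv, psiM_xv, psiM_Tv]
        ring
      rw [hz, Polynomial.coeff_zero]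
      exact dvd_zero F
    · rw [Ideal.span_le]
      rintro p ⟨i, hi, rfl⟩
      rw [SetLike.mem_coe, mem_Jdef_iff]
      intro b
      rw [hfs i hi, Polynomial.coeff_C_mul, Polynomial.coeff_X_pow]
      split_ifs
      · rw [mul_one]
      · rw [mul_zero]
        exact dvd_zero F


end
end
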